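/- arXiv:2202.02936 — 9 statements merged into one kernel-verified Lean document; each statement's English description precedes it below -/
import Mathlib

section
/- Let γ > 0, S an l₀×l₀ matrix with ‖S‖ ≤ e^γ, Γ an l₁×l₁ matrix with ‖Γ⁻¹‖ ≤ e^{-2γ}, and for each n let Wₙ = (aₙ bₙ; cₙ dₙ) be an (l₀+l₁)×(l₀+l₁) matrix (in block form) with ‖Wₙ‖ ≤ (e^{2γ}−e^γ)/4. Define 𝒳₀ = I and 𝒳_{n+1} = (T + Wₙ)𝒳ₙ where T = diag(S, Γ), and write 𝒳ₙ = (Aₙ Bₙ; Cₙ Dₙ) in blocks. Then for all n, the block Dₙ is invertible and ‖Bₙ Dₙ⁻¹‖ ≤ 1. -/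
open scoped Matrix.Norms.L2Operator

set_option linter.unusedSectionVars false

section Aux

open Matrix

variable {m₀ m₁ n₀ n₁ : Type*} [Fintype m₀] [Fintype m₁] [Fintype n₀] [Fintype n₁]
  [DecidableEq m₀] [DecidableEq m₁] [DecidableEq n₀] [DecidableEq n₁]

lemma stmt2_norm_row_inl (A : Matrix (m₀ ⊕ m₁) n₀ ℂ) : ‖A.submatrix Sum.inl id‖ ≤ ‖A‖ := by
  rw [Matrix.l2_opNorm_def]
  refine ContinuousLinearMap.opNorm_le_bound _ (norm_nonneg A) fun x => ?_
  refine le_trans ?_ (A.l2_opNorm_mulVec x)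
  have hx : ((Matrix.toEuclideanLin.trans LinearMap.toContinuousLinearMap) (A.submatrix Sum.inl id)) x
      = ((WithLp.equiv 2 _).symm (fun i => (A *ᵥ (WithLp.equiv 2 _ x)) (Sum.inl i)) : EuclideanSpace ℂ m₀) := rfl
  rw [hx]
  have h2 : ((EuclideanSpace.equiv (m₀ ⊕ m₁) ℂ).symm (A *ᵥ x) : EuclideanSpace ℂ (m₀ ⊕ m₁))
      = (WithLp.equiv 2 _).symm (A *ᵥ (WithLp.equiv 2 _ x)) := rfl
  rw [h2]
  rw [EuclideanSpace.norm_eq, EuclideanSpace.norm_eq]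
  apply Real.sqrt_le_sqrt
  simp only [WithLp.equiv_symm_apply, PiLp.toLp_apply]
  rw [Fintype.sum_sum_type]
  exact le_add_of_nonneg_right (by positivity)

lemma stmt2_norm_row_inr (A : Matrix (m₀ ⊕ m₁) n₀ ℂ) : ‖A.submatrix Sum.inr id‖ ≤ ‖A‖ := by
  rw [Matrix.l2_opNorm_def]
  refine ContinuousLinearMap.opNorm_le_bound _ (norm_nonneg A) fun x => ?_
  refine le_trans ?_ (A.l2_opNorm_mulVec x)
  have hx : ((Matrix.toEuclideanLin.trans LinearMap.toContinuousLinearMap) (A.submatrix Sum.inr id)) x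
      = ((WithLp.equiv 2 _).symm (fun i => (A *ᵥ (WithLp.equiv 2 _ x)) (Sum.inr i)) : EuclideanSpace ℂ m₁) := rfl
  rw [hx]
  have h2 : ((EuclideanSpace.equiv (m₀ ⊕ m₁) ℂ).symm (A *ᵥ x) : EuclideanSpace ℂ (m₀ ⊕ m₁))
      = (WithLp.equiv 2 _).symm (A *ᵥ (WithLp.equiv 2 _ x)) := rfl
  rw [h2]
  rw [EuclideanSpace.norm_eq, EuclideanSpace.norm_eq]
  apply Real.sqrt_le_sqrt
  simp only [WithLp.equiv_symm_apply, PiLp.toLp_apply]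
  rw [Fintype.sum_sum_type]
  exact le_add_of_nonneg_left (by positivity)

lemma stmt2_norm_col_inl (A : Matrix m₀ (n₀ ⊕ n₁) ℂ) : ‖A.submatrix id Sum.inl‖ ≤ ‖A‖ := by
  rw [Matrix.l2_opNorm_def]
  refine ContinuousLinearMap.opNorm_le_bound _ (norm_nonneg A) fun x => ?_
  set y : EuclideanSpace ℂ (n₀ ⊕ n₁) :=
    (WithLp.equiv 2 _).symm (Sum.elim ((WithLp.equiv 2 _) x) 0) with hy
  have hynorm : ‖y‖ = ‖x‖ := by
    rw [EuclideanSpace.norm_eq, EuclideanSpace.norm_eq, hy]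
    simp only [WithLp.equiv_symm_apply, PiLp.toLp_apply]
    rw [Fintype.sum_sum_type]
    simp [WithLp.equiv_symm_apply, PiLp.toLp_apply]
  have hfun : ((A.submatrix id Sum.inl) *ᵥ ((WithLp.equiv 2 _) x)) = (A *ᵥ ((WithLp.equiv 2 _) y)) := by
    funext i
    rw [hy]
    simp only [Equiv.apply_symm_apply]
    simp [Matrix.mulVec, dotProduct, Fintype.sum_sum_type]
  have h0 : ((Matrix.toEuclideanLin.trans LinearMap.toContinuousLinearMap) (A.submatrix id Sum.inl)) x
      = ((WithLp.equiv 2 _).symm ((A.submatrix id Sum.inl) *ᵥ ((WithLp.equiv 2 _) x)) : EuclideanSpace ℂ m₀) := rfl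
  rw [h0, hfun, ← hynorm]
  exact A.l2_opNorm_mulVec y

lemma stmt2_norm_col_inr (A : Matrix m₀ (n₀ ⊕ n₁) ℂ) : ‖A.submatrix id Sum.inr‖ ≤ ‖A‖ := by
  rw [Matrix.l2_opNorm_def]
  refine ContinuousLinearMap.opNorm_le_bound _ (norm_nonneg A) fun x => ?_
  set y : EuclideanSpace ℂ (n₀ ⊕ n₁) :=
    (WithLp.equiv 2 _).symm (Sum.elim 0 ((WithLp.equiv 2 _) x)) with hy
  have hynorm : ‖y‖ = ‖x‖ := by
    rw [EuclideanSpace.norm_eq, EuclideanSpace.norm_eq, hy]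
    simp only [WithLp.equiv_symm_apply, PiLp.toLp_apply]
    rw [Fintype.sum_sum_type]
    simp [WithLp.equiv_symm_apply, PiLp.toLp_apply]
  have hfun : ((A.submatrix id Sum.inr) *ᵥ ((WithLp.equiv 2 _) x)) = (A *ᵥ ((WithLp.equiv 2 _) y)) := by
    funext i
    rw [hy]
    simp only [Equiv.apply_symm_apply]
    simp [Matrix.mulVec, dotProduct, Fintype.sum_sum_type]
  have h0 : ((Matrix.toEuclideanLin.trans LinearMap.toContinuousLinearMap) (A.submatrix id Sum.inr)) x
      = ((WithLp.equiv 2 _).symm ((A.submatrix id Sum.inr) *ᵥ ((WithLp.equiv 2 _) x)) : EuclideanSpace ℂ m₀) := rfl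
  rw [h0, hfun, ← hynorm]
  exact A.l2_opNorm_mulVec y

lemma stmt2_norm_toBlocks₁₁ (A : Matrix (m₀ ⊕ m₁) (n₀ ⊕ n₁) ℂ) : ‖A.toBlocks₁₁‖ ≤ ‖A‖ := by
  have h : A.toBlocks₁₁ = (A.submatrix Sum.inl id).submatrix id Sum.inl := rfl
  rw [h]; exact le_trans (stmt2_norm_col_inl _) (stmt2_norm_row_inl _)

lemma stmt2_norm_toBlocks₁₂ (A : Matrix (m₀ ⊕ m₁) (n₀ ⊕ n₁) ℂ) : ‖A.toBlocks₁₂‖ ≤ ‖A‖ := by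
  have h : A.toBlocks₁₂ = (A.submatrix Sum.inl id).submatrix id Sum.inr := rfl
  rw [h]; exact le_trans (stmt2_norm_col_inr _) (stmt2_norm_row_inl _)

lemma stmt2_norm_toBlocks₂₁ (A : Matrix (m₀ ⊕ m₁) (n₀ ⊕ n₁) ℂ) : ‖A.toBlocks₂₁‖ ≤ ‖A‖ := by
  have h : A.toBlocks₂₁ = (A.submatrix Sum.inr id).submatrix id Sum.inl := rfl
  rw [h]; exact le_trans (stmt2_norm_col_inl _) (stmt2_norm_row_inr _)

lemma stmt2_norm_toBlocks₂₂ (A : Matrix (m₀ ⊕ m₁) (n₀ ⊕ n₁) ℂ) : ‖A.toBlocks₂₂‖ ≤ ‖A‖ := by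
  have h : A.toBlocks₂₂ = (A.submatrix Sum.inr id).submatrix id Sum.inr := rfl
  rw [h]; exact le_trans (stmt2_norm_col_inr _) (stmt2_norm_row_inr _)

variable {n : Type*} [Fintype n] [DecidableEq n]

lemma stmt2_matrix_norm_one_le : ‖(1 : Matrix n n ℂ)‖ ≤ 1 := by
  rw [Matrix.cstar_norm_def, _root_.map_one]
  exact ContinuousLinearMap.norm_id_le

lemma stmt2_inv_one_add_bound (M : Matrix n n ℂ) (h : ‖M‖ < 1) :
    IsUnit (1 + M) ∧ ‖(1 + M)⁻¹‖ ≤ (1 - ‖M‖)⁻¹ := by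
  haveI : CompleteSpace (Matrix n n ℂ) := FiniteDimensional.complete ℂ _
  have hM : ‖-M‖ < 1 := by rwa [norm_neg]
  have hu : IsUnit (1 + M) := by
    have := isUnit_one_sub_of_norm_lt_one hM
    rwa [sub_neg_eq_add] at this
  refine ⟨hu, ?_⟩
  have h1 : (1 + M)⁻¹ = ∑' i : ℕ, (-M) ^ i := by
    rw [Matrix.nonsing_inv_eq_ringInverse, ← sub_neg_eq_add 1 M,
      ← geom_series_eq_inverse (-M) hM]
  rw [h1]
  have h2 := tsum_geometric_le_of_norm_lt_one (-M) hM
  rw [norm_neg] at h2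
  have h3 : ‖(1 : Matrix n n ℂ)‖ ≤ 1 := stmt2_matrix_norm_one_le
  linarith

end Aux


/-- In the block transfer-matrix recursion `𝒳₀ = I`, `𝒳_{n+1} = (T + Wₙ)𝒳ₙ`,
with `T = diag(S, Γ)`, `‖S‖ ≤ e^γ`, `‖Γ⁻¹‖ ≤ e^{-2γ}` and
`‖Wₙ‖ ≤ (e^{2γ} - e^γ)/4`, the lower-right block `Dₙ` of `𝒳ₙ` is invertible
and `‖Zₙ‖ = ‖Bₙ Dₙ⁻¹‖ ≤ 1` for all `n`. -/
theorem stmt2 (l₀ l₁ : ℕ) (γ : ℝ) (hγ : 0 < γ)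
    (S : Matrix (Fin l₀) (Fin l₀) ℂ) (Γ : Matrix (Fin l₁) (Fin l₁) ℂ)
    (hS : ‖S‖ ≤ Real.exp γ)
    (hΓunit : IsUnit Γ) (hΓ : ‖Γ⁻¹‖ ≤ Real.exp (-(2 * γ)))
    (W : ℕ → Matrix (Fin l₀ ⊕ Fin l₁) (Fin l₀ ⊕ Fin l₁) ℂ)
    (hW : ∀ n, ‖W n‖ ≤ (Real.exp (2 * γ) - Real.exp γ) / 4)
    (𝒳 : ℕ → Matrix (Fin l₀ ⊕ Fin l₁) (Fin l₀ ⊕ Fin l₁) ℂ)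
    (h0 : 𝒳 0 = 1)
    (hrec : ∀ n, 𝒳 (n + 1) = (Matrix.fromBlocks S 0 0 Γ + W n) * 𝒳 n) :
    ∀ n, IsUnit ((𝒳 n).toBlocks₂₂) ∧
      ‖(𝒳 n).toBlocks₁₂ * ((𝒳 n).toBlocks₂₂)⁻¹‖ ≤ 1 := by
  have hdetΓ : IsUnit Γ.det := (Matrix.isUnit_iff_isUnit_det Γ).mp hΓunit
  set E := Real.exp γ with hE
  have hE1 : 1 < E := by rw [hE, ← Real.exp_zero]; exact Real.exp_lt_exp.mpr hγ
  have hE0 : 0 < E := lt_trans one_pos hE1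
  have hE2 : Real.exp (2 * γ) = E ^ 2 := by rw [hE, two_mul, Real.exp_add, sq]
  have hEm2 : Real.exp (-(2 * γ)) = (E ^ 2)⁻¹ := by rw [Real.exp_neg, hE2]
  set ε := (Real.exp (2 * γ) - Real.exp γ) / 4 with hεdef
  have hεE : ε = (E ^ 2 - E) / 4 := by rw [hεdef, hE2, hE]
  have hε0 : 0 ≤ ε := by rw [hεE]; nlinarith
  intro n
  induction n with
  | zero =>
    rw [h0]
    constructor
    · rw [← Matrix.fromBlocks_one, Matrix.toBlocks_fromBlocks₂₂]
      exact isUnit_one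
    · rw [← Matrix.fromBlocks_one, Matrix.toBlocks_fromBlocks₁₂]
      rw [Matrix.zero_mul, norm_zero]
      exact zero_le_one
  | succ n ih =>
    obtain ⟨hDu, hZ⟩ := ih
    have hdetD : IsUnit ((𝒳 n).toBlocks₂₂).det :=
      (Matrix.isUnit_iff_isUnit_det _).mp hDu
    set B := (𝒳 n).toBlocks₁₂ with hB
    set D := (𝒳 n).toBlocks₂₂ with hD
    set a := (W n).toBlocks₁₁ with ha'
    set b := (W n).toBlocks₁₂ with hb'
    set c := (W n).toBlocks₂₁ with hc'
    set d := (W n).toBlocks₂₂ with hd'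
    have hX : 𝒳 (n + 1) = Matrix.fromBlocks (S + a) b c (Γ + d) * 𝒳 n := by
      rw [hrec n]
      congr 1
      conv_lhs => rw [← Matrix.fromBlocks_toBlocks (W n)]
      rw [Matrix.fromBlocks_add]
      simp
      exact ⟨rfl, rfl, rfl, rfl⟩
    have hB1 : (𝒳 (n + 1)).toBlocks₁₂ = (S + a) * B + b * D := by
      rw [hX]
      conv_lhs => rw [← Matrix.fromBlocks_toBlocks (𝒳 n)]
      rw [Matrix.fromBlocks_multiply, Matrix.toBlocks_fromBlocks₁₂]
    have hD1 : (𝒳 (n + 1)).toBlocks₂₂ = c * B + (Γ + d) * D := by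
      rw [hX]
      conv_lhs => rw [← Matrix.fromBlocks_toBlocks (𝒳 n)]
      rw [Matrix.fromBlocks_multiply, Matrix.toBlocks_fromBlocks₂₂]
    -- norms of the perturbation blocks
    have hna : ‖a‖ ≤ ε := le_trans (stmt2_norm_toBlocks₁₁ _) (hW n)
    have hnb : ‖b‖ ≤ ε := le_trans (stmt2_norm_toBlocks₁₂ _) (hW n)
    have hnc : ‖c‖ ≤ ε := le_trans (stmt2_norm_toBlocks₂₁ _) (hW n)
    have hnd : ‖d‖ ≤ ε := le_trans (stmt2_norm_toBlocks₂₂ _) (hW n)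
    set Z := B * D⁻¹ with hZdef
    set M := Γ⁻¹ * (c * Z + d) with hM'
    have hncZ : ‖c * Z + d‖ ≤ 2 * ε := by
      refine le_trans (norm_add_le _ _) ?_
      have h1 : ‖c * Z‖ ≤ ε := by
        refine le_trans (Matrix.l2_opNorm_mul _ _) ?_
        calc ‖c‖ * ‖Z‖ ≤ ε * 1 := mul_le_mul hnc hZ (norm_nonneg _) hε0
          _ = ε := mul_one ε
      linarith
    have hnM : ‖M‖ ≤ (1 - E⁻¹) / 2 := by
      refine le_trans (Matrix.l2_opNorm_mul _ _) ?_
      calc ‖Γ⁻¹‖ * ‖c * Z + d‖ ≤ (E ^ 2)⁻¹ * (2 * ε) := by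
            refine mul_le_mul (hEm2 ▸ hΓ) hncZ (norm_nonneg _) ?_
            positivity
        _ = (1 - E⁻¹) / 2 := by
            rw [hεE]
            field_simp
            ring
    have hMlt : ‖M‖ < 1 := by
      have : (0:ℝ) < E⁻¹ := by positivity
      linarith
    obtain ⟨hMunit, hMinv⟩ := stmt2_inv_one_add_bound M hMlt
    have hGM : Γ * (1 + M) = Γ + (c * Z + d) := by
      rw [mul_add, mul_one, hM', ← mul_assoc, Matrix.mul_nonsing_inv Γ hdetΓ, one_mul]
    have hZD : Z * D = B := by
      rw [hZdef, Matrix.mul_assoc, Matrix.nonsing_inv_mul D hdetD, Matrix.mul_one]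
    have hD1' : (𝒳 (n + 1)).toBlocks₂₂ = Γ * (1 + M) * D := by
      have h' : (Γ + (c * Z + d)) * D = c * B + (Γ + d) * D := by
        rw [Matrix.add_mul, Matrix.add_mul, Matrix.mul_assoc c, hZD, Matrix.add_mul]
        abel
      rw [hD1, hGM, h']
    have hD1unit : IsUnit ((𝒳 (n + 1)).toBlocks₂₂) := by
      rw [hD1']
      exact (hΓunit.mul hMunit).mul hDu
    refine ⟨hD1unit, ?_⟩
    have hB1' : (𝒳 (n + 1)).toBlocks₁₂ = ((S + a) * Z + b) * D := by
      have h' : ((S + a) * Z + b) * D = (S + a) * B + b * D := by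
        rw [Matrix.add_mul, Matrix.mul_assoc, hZD]
      rw [hB1, h']
    have hZ1 : (𝒳 (n + 1)).toBlocks₁₂ * ((𝒳 (n + 1)).toBlocks₂₂)⁻¹
        = ((S + a) * Z + b) * ((1 + M)⁻¹ * Γ⁻¹) := by
      rw [hB1', hD1', Matrix.mul_inv_rev, Matrix.mul_inv_rev, Matrix.mul_assoc, ← Matrix.mul_assoc D,
        Matrix.mul_nonsing_inv D hdetD, one_mul]
    rw [hZ1]
    -- norm bounds
    have hnum : ‖(S + a) * Z + b‖ ≤ (E ^ 2 + E) / 2 := by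
      refine le_trans (norm_add_le _ _) ?_
      have h1 : ‖(S + a) * Z‖ ≤ E + ε := by
        refine le_trans (Matrix.l2_opNorm_mul _ _) ?_
        have hSa : ‖S + a‖ ≤ E + ε := le_trans (norm_add_le _ _) (by rw [hE] at hS; linarith)
        calc ‖S + a‖ * ‖Z‖ ≤ (E + ε) * 1 :=
              mul_le_mul hSa hZ (norm_nonneg _) (by positivity)
          _ = E + ε := mul_one _
      rw [hεE] at h1 hnb
      linarith
    have hMpos : (0:ℝ) < 1 - ‖M‖ := by linarith
    have hinvM : ‖(1 + M)⁻¹‖ ≤ 2 / (1 + E⁻¹) := by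
      refine le_trans hMinv ?_
      have h1 : (1 + E⁻¹) / 2 ≤ 1 - ‖M‖ := by linarith
      calc (1 - ‖M‖)⁻¹ ≤ ((1 + E⁻¹) / 2)⁻¹ := by
            apply inv_anti₀ (by positivity) h1
        _ = 2 / (1 + E⁻¹) := by rw [inv_div]
    have hdenom : ‖(1 + M)⁻¹ * Γ⁻¹‖ ≤ 2 / (1 + E⁻¹) * (E ^ 2)⁻¹ := by
      refine le_trans (Matrix.l2_opNorm_mul _ _) ?_
      exact mul_le_mul hinvM (hEm2 ▸ hΓ) (norm_nonneg _) (by positivity)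
    refine le_trans (Matrix.l2_opNorm_mul _ _) ?_
    calc ‖(S + a) * Z + b‖ * ‖(1 + M)⁻¹ * Γ⁻¹‖
        ≤ (E ^ 2 + E) / 2 * (2 / (1 + E⁻¹) * (E ^ 2)⁻¹) :=
          mul_le_mul hnum hdenom (norm_nonneg _) (by positivity)
      _ = 1 := by field_simp
end

section
/- In the setting of the block transfer matrix recursion (T = diag(S,Γ) with ‖S‖ ≤ e^γ, ‖Γ⁻¹‖ ≤ e^{-2γ}, perturbations ‖Wₙ‖ ≤ (e^{2γ}−e^γ)/4), if additionally Wₙ → 0 as n → ∞, then Zₙ = Bₙ Dₙ⁻¹ → 0 as n → ∞. -/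
open scoped Matrix.Norms.L2Operator
open Matrix Filter


private lemma l2_norm_le_of_bound {m n : Type*} [Fintype m] [Fintype n] [DecidableEq n]
    (A : Matrix m n ℂ) {c : ℝ} (hc : 0 ≤ c)
    (h : ∀ x : EuclideanSpace ℂ n, ‖(EuclideanSpace.equiv m ℂ).symm (A *ᵥ x)‖ ≤ c * ‖x‖) :
    ‖A‖ ≤ c := by
  rw [Matrix.l2_opNorm_def]
  exact ContinuousLinearMap.opNorm_le_bound _ hc h

private lemma l2_opNorm_submatrix_le {m n m' n' : Type*} [Fintype m] [Fintype n] [Fintype m']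
    [Fintype n'] [DecidableEq n] [DecidableEq n'] (A : Matrix m n ℂ) {f : m' → m} {g : n' → n}
    (hf : Function.Injective f) (hg : Function.Injective g) :
    ‖A.submatrix f g‖ ≤ ‖A‖ := by
  classical
  apply l2_norm_le_of_bound _ (norm_nonneg A)
  intro x
  set y : EuclideanSpace ℂ n := (EuclideanSpace.equiv n ℂ).symm (Function.extend g ⇑x 0) with hy_def
  have hy : ‖y‖ = ‖x‖ := by
    rw [EuclideanSpace.norm_eq, EuclideanSpace.norm_eq]
    congr 1
    rw [← Finset.sum_subset (Finset.subset_univ (Finset.univ.image g))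
      (fun j _ hj => ?_), Finset.sum_image (fun a _ b _ hab => hg hab)]
    · refine Finset.sum_congr rfl fun j' _ => ?_
      simp [hy_def, hg.extend_apply]
    · have : ¬∃ a, g a = j := by
        rintro ⟨a, rfl⟩; exact hj (Finset.mem_image_of_mem g (Finset.mem_univ a))
      simp [hy_def, Function.extend_apply' _ _ _ this]
  have hmv : ∀ i', (A.submatrix f g *ᵥ ⇑x) i' = (A *ᵥ Function.extend g ⇑x 0) (f i') := by
    intro i'
    simp only [Matrix.mulVec, dotProduct, Matrix.submatrix_apply]
    rw [← Finset.sum_subset (Finset.subset_univ (Finset.univ.image g))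
      (fun j _ hj => ?_), Finset.sum_image (fun a _ b _ hab => hg hab)]
    · exact Finset.sum_congr rfl fun j' _ => by rw [hg.extend_apply]
    · have : ¬∃ a, g a = j := by
        rintro ⟨a, rfl⟩; exact hj (Finset.mem_image_of_mem g (Finset.mem_univ a))
      simp [Function.extend_apply' _ _ _ this]
  calc ‖(EuclideanSpace.equiv m' ℂ).symm (A.submatrix f g *ᵥ ⇑x)‖
      ≤ ‖(EuclideanSpace.equiv m ℂ).symm (A *ᵥ Function.extend g ⇑x 0)‖ := by
        rw [EuclideanSpace.norm_eq, EuclideanSpace.norm_eq]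
        apply Real.sqrt_le_sqrt
        calc ∑ i', ‖(A.submatrix f g *ᵥ ⇑x) i'‖ ^ 2
            = ∑ i', ‖(A *ᵥ Function.extend g ⇑x 0) (f i')‖ ^ 2 := by
              exact Finset.sum_congr rfl fun i' _ => by rw [hmv]
          _ = ∑ i ∈ Finset.univ.image f, ‖(A *ᵥ Function.extend g ⇑x 0) i‖ ^ 2 := by
              rw [Finset.sum_image (fun a _ b _ hab => hf hab)]
          _ ≤ ∑ i, ‖(A *ᵥ Function.extend g ⇑x 0) i‖ ^ 2 :=
              Finset.sum_le_sum_of_subset_of_nonneg (Finset.subset_univ _)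
                (fun i _ _ => by positivity)
    _ ≤ ‖A‖ * ‖y‖ := A.l2_opNorm_mulVec y
    _ = ‖A‖ * ‖x‖ := by rw [hy]


private lemma matrix_norm_one_le (k : ℕ) : ‖(1 : Matrix (Fin k) (Fin k) ℂ)‖ ≤ 1 := by
  rw [Matrix.cstar_norm_def, _root_.map_one]
  rw [ContinuousLinearMap.one_def]
  exact ContinuousLinearMap.norm_id_le

private lemma inv_one_add_bound {k : ℕ} (E : Matrix (Fin k) (Fin k) ℂ) (h : ‖E‖ < 1) :
    IsUnit (1 + E) ∧ ‖(1 + E)⁻¹‖ ≤ (1 - ‖E‖)⁻¹ := by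
  haveI : CompleteSpace (Matrix (Fin k) (Fin k) ℂ) := FiniteDimensional.complete ℂ _
  have hu : IsUnit (1 + E) := by
    have := isUnit_one_sub_of_norm_lt_one (x := -E) (by simpa using h)
    simpa using this
  refine ⟨hu, ?_⟩
  have hdet := (Matrix.isUnit_iff_isUnit_det _).mp hu
  have e1 : (1 + E) * (1 + E)⁻¹ = 1 := Matrix.mul_nonsing_inv _ hdet
  rw [add_mul, one_mul] at e1
  have e2 : (1 + E)⁻¹ = 1 - E * (1 + E)⁻¹ := eq_sub_of_add_eq e1
  have e3 : ‖(1 + E)⁻¹‖ ≤ 1 + ‖E‖ * ‖(1 + E)⁻¹‖ := by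
    calc ‖(1 + E)⁻¹‖ = ‖(1 : Matrix (Fin k) (Fin k) ℂ) - E * (1 + E)⁻¹‖ := by rw [← e2]
      _ ≤ ‖(1 : Matrix (Fin k) (Fin k) ℂ)‖ + ‖E * (1 + E)⁻¹‖ := norm_sub_le _ _
      _ ≤ 1 + ‖E‖ * ‖(1 + E)⁻¹‖ :=
          add_le_add (matrix_norm_one_le k) (Matrix.l2_opNorm_mul _ _)
  have h1 : 0 < 1 - ‖E‖ := by linarith
  rw [show (1 - ‖E‖)⁻¹ = 1 / (1 - ‖E‖) from (one_div _).symm, le_div_iff₀ h1]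
  nlinarith [norm_nonneg ((1 + E)⁻¹)]

private lemma tendsto_zero_of_contract (a b : ℕ → ℝ) (c : ℝ) (hc0 : 0 ≤ c) (hc1 : c < 1)
    (ha0 : ∀ n, 0 ≤ a n) (ha1 : ∀ n, a n ≤ 1)
    (hb : Tendsto b atTop (nhds 0))
    (hrec : ∀ n, a (n + 1) ≤ c * a n + b n) :
    Tendsto a atTop (nhds 0) := by
  rw [Metric.tendsto_atTop]
  intro ε hε
  obtain ⟨N, hN⟩ := Metric.tendsto_atTop.mp hb ((1 - c) * ε / 2) (by nlinarith)
  have key : ∀ k, a (N + k) ≤ c ^ k + ε / 2 := by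
    intro k
    induction k with
    | zero => simpa using by linarith [ha1 N]
    | succ k ih =>
      have hb' := hN (N + k) (Nat.le_add_right _ _)
      rw [Real.dist_eq, sub_zero] at hb'
      have hb2 : b (N + k) ≤ (1 - c) * ε / 2 := (abs_le.mp hb'.le).2
      have hr := hrec (N + k)
      have heq : N + (k + 1) = N + k + 1 := by omega
      rw [heq]
      have := mul_le_mul_of_nonneg_left ih hc0
      calc a (N + k + 1) ≤ c * a (N + k) + b (N + k) := hr
        _ ≤ c * (c ^ k + ε / 2) + (1 - c) * ε / 2 := by
            exact add_le_add (mul_le_mul_of_nonneg_left ih hc0) hb2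
        _ ≤ c ^ (k + 1) + ε / 2 := by ring_nf; nlinarith
  obtain ⟨K, hK⟩ := Metric.tendsto_atTop.mp
    (tendsto_pow_atTop_nhds_zero_of_lt_one hc0 hc1) (ε / 2) (by linarith)
  refine ⟨N + K, fun n hn => ?_⟩
  rw [Real.dist_eq, sub_zero, abs_of_nonneg (ha0 n)]
  obtain ⟨k, rfl⟩ : ∃ k, n = N + k := ⟨n - N, by omega⟩
  have hk : K ≤ k := by omega
  have h2 := hK k hk
  rw [Real.dist_eq, sub_zero, abs_of_nonneg (pow_nonneg hc0 k)] at h2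
  linarith [key k]

set_option maxHeartbeats 1000000

/-- If additionally `Wₙ → 0`, then `Zₙ = Bₙ Dₙ⁻¹ → 0`. -/

theorem stmt3 (l₀ l₁ : ℕ) (γ : ℝ) (hγ : 0 < γ)
    (S : Matrix (Fin l₀) (Fin l₀) ℂ) (Γ : Matrix (Fin l₁) (Fin l₁) ℂ)
    (hS : ‖S‖ ≤ Real.exp γ)
    (hΓunit : IsUnit Γ) (hΓ : ‖Γ⁻¹‖ ≤ Real.exp (-(2 * γ)))
    (W : ℕ → Matrix (Fin l₀ ⊕ Fin l₁) (Fin l₀ ⊕ Fin l₁) ℂ)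
    (hW : ∀ n, ‖W n‖ ≤ (Real.exp (2 * γ) - Real.exp γ) / 4)
    (hW0 : Filter.Tendsto W Filter.atTop (nhds 0))
    (𝒳 : ℕ → Matrix (Fin l₀ ⊕ Fin l₁) (Fin l₀ ⊕ Fin l₁) ℂ)
    (h0 : 𝒳 0 = 1)
    (hrec : ∀ n, 𝒳 (n + 1) = (Matrix.fromBlocks S 0 0 Γ + W n) * 𝒳 n) :
    Filter.Tendsto (fun n => (𝒳 n).toBlocks₁₂ * ((𝒳 n).toBlocks₂₂)⁻¹)
      Filter.atTop (nhds 0) := by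
  classical
  have ht : 1 < Real.exp γ := by
    rw [← Real.exp_zero]; exact Real.exp_lt_exp.mpr hγ
  set t := Real.exp γ with ht_def
  have ht0 : 0 < t := by linarith
  have h2γ : Real.exp (2 * γ) = t * t := by rw [two_mul, Real.exp_add]
  have hnegγ : Real.exp (-(2 * γ)) = (t * t)⁻¹ := by rw [Real.exp_neg, h2γ]
  set c : ℝ := 2 * t / (t * t + t) with hc_def
  set C : ℝ := 4 / (t * t + t) with hC_def
  have hs0 : 0 < t * t + t := by nlinarith
  have hc0 : 0 ≤ c := by positivity
  have hc1 : c < 1 := by rw [hc_def, div_lt_one hs0]; nlinarith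
  have hC0 : 0 ≤ C := by positivity
  set Z : ℕ → Matrix (Fin l₀) (Fin l₁) ℂ :=
    fun n => (𝒳 n).toBlocks₁₂ * ((𝒳 n).toBlocks₂₂)⁻¹ with hZ_def
  have hΓ' : ‖Γ⁻¹‖ ≤ (t * t)⁻¹ := by rwa [hnegγ] at hΓ
  have hW' : ∀ n, ‖W n‖ ≤ (t * t - t) / 4 := fun n => by
    have := hW n; rwa [h2γ] at this
  have hdetΓ := (Matrix.isUnit_iff_isUnit_det Γ).mp hΓunit
  have hΓΓ : Γ * Γ⁻¹ = 1 := Matrix.mul_nonsing_inv Γ hdetΓ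
  have step : ∀ n, IsUnit (𝒳 n).toBlocks₂₂ → ‖Z n‖ ≤ 1 →
      IsUnit (𝒳 (n + 1)).toBlocks₂₂ ∧ ‖Z (n + 1)‖ ≤ c * ‖Z n‖ + C * ‖W n‖ := by
    intro n hD hZn
    set Bn := (𝒳 n).toBlocks₁₂ with hBn
    set Dn := (𝒳 n).toBlocks₂₂ with hDn
    set W11 := (W n).toBlocks₁₁ with hW11
    set W12 := (W n).toBlocks₁₂ with hW12
    set W21 := (W n).toBlocks₂₁ with hW21
    set W22 := (W n).toBlocks₂₂ with hW22
    have hw11 : ‖W11‖ ≤ ‖W n‖ :=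
      l2_opNorm_submatrix_le (W n) Sum.inl_injective Sum.inl_injective
    have hw12 : ‖W12‖ ≤ ‖W n‖ :=
      l2_opNorm_submatrix_le (W n) Sum.inl_injective Sum.inr_injective
    have hw21 : ‖W21‖ ≤ ‖W n‖ :=
      l2_opNorm_submatrix_le (W n) Sum.inr_injective Sum.inl_injective
    have hw22 : ‖W22‖ ≤ ‖W n‖ :=
      l2_opNorm_submatrix_le (W n) Sum.inr_injective Sum.inr_injective
    have hM : Matrix.fromBlocks S 0 0 Γ + W n
        = Matrix.fromBlocks (S + W11) W12 W21 (Γ + W22) := by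
      conv_lhs => rw [← Matrix.fromBlocks_toBlocks (W n)]
      rw [Matrix.fromBlocks_add, zero_add, zero_add]
    have hB1 : (𝒳 (n + 1)).toBlocks₁₂ = (S + W11) * Bn + W12 * Dn := by
      rw [hrec n, hM]
      conv_lhs => rw [← Matrix.fromBlocks_toBlocks (𝒳 n), Matrix.fromBlocks_multiply]
      rw [Matrix.toBlocks_fromBlocks₁₂]
    have hD1 : (𝒳 (n + 1)).toBlocks₂₂ = W21 * Bn + (Γ + W22) * Dn := by
      rw [hrec n, hM]
      conv_lhs => rw [← Matrix.fromBlocks_toBlocks (𝒳 n), Matrix.fromBlocks_multiply]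
      rw [Matrix.toBlocks_fromBlocks₂₂]
    have hdetD := (Matrix.isUnit_iff_isUnit_det Dn).mp hD
    have hBZ : Bn = Z n * Dn := by
      have hz : Z n = Bn * Dn⁻¹ := rfl
      rw [hz, Matrix.mul_assoc, Matrix.nonsing_inv_mul Dn hdetD, Matrix.mul_one]
    set E := Γ⁻¹ * (W21 * Z n + W22) with hE_def
    have hK : Γ + (W21 * Z n + W22) = Γ * (1 + E) := by
      rw [mul_add, mul_one, hE_def, ← Matrix.mul_assoc Γ Γ⁻¹ (W21 * Z n + W22), hΓΓ, Matrix.one_mul]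
    have hE : ‖E‖ ≤ (t - 1) / (2 * t) := by
      have a1 : ‖W21 * Z n‖ ≤ ‖W n‖ := by
        calc ‖W21 * Z n‖ ≤ ‖W21‖ * ‖Z n‖ := Matrix.l2_opNorm_mul _ _
          _ ≤ ‖W n‖ * 1 := mul_le_mul hw21 hZn (norm_nonneg _) (norm_nonneg _)
          _ = ‖W n‖ := mul_one _
      have h1 : ‖W21 * Z n + W22‖ ≤ 2 * ((t * t - t) / 4) := by
        have := norm_add_le (W21 * Z n) W22
        have := hW' n
        linarith
      calc ‖E‖ ≤ ‖Γ⁻¹‖ * ‖W21 * Z n + W22‖ := Matrix.l2_opNorm_mul _ _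
        _ ≤ (t * t)⁻¹ * (2 * ((t * t - t) / 4)) :=
            mul_le_mul hΓ' h1 (norm_nonneg _) (by positivity)
        _ = (t - 1) / (2 * t) := by field_simp; ring
    have hE1 : ‖E‖ < 1 := by
      have : (t - 1) / (2 * t) < 1 := by rw [div_lt_one (by linarith)]; linarith
      linarith
    obtain ⟨hu, hinv⟩ := inv_one_add_bound E hE1
    have hinv2 : ‖(1 + E)⁻¹‖ ≤ 2 * t / (t + 1) := by
      have hb : (t + 1) / (2 * t) ≤ 1 - ‖E‖ := by
        have h2 : (t + 1) / (2 * t) = 1 - (t - 1) / (2 * t) := by field_simp; ring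
        rw [h2]; linarith
      calc ‖(1 + E)⁻¹‖ ≤ (1 - ‖E‖)⁻¹ := hinv
        _ ≤ ((t + 1) / (2 * t))⁻¹ := by
            apply inv_anti₀ (by positivity) hb
        _ = 2 * t / (t + 1) := by rw [inv_div]
    have hD2 : (𝒳 (n + 1)).toBlocks₂₂ = Γ * (1 + E) * Dn := by
      rw [hD1, hBZ, ← Matrix.mul_assoc, ← add_mul]
      congr 1
      rw [← hK]; abel
    have hDu : IsUnit (𝒳 (n + 1)).toBlocks₂₂ := by
      rw [hD2]; exact (hΓunit.mul hu).mul hD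
    refine ⟨hDu, ?_⟩
    have hZ2 : Z (n + 1) = ((S + W11) * Z n + W12) * ((1 + E)⁻¹ * Γ⁻¹) := by
      have hz : Z (n + 1) = (𝒳 (n + 1)).toBlocks₁₂ * ((𝒳 (n + 1)).toBlocks₂₂)⁻¹ := rfl
      rw [hz, hB1, hD2, Matrix.mul_inv_rev, Matrix.mul_inv_rev, hBZ]
      have hnum : (S + W11) * (Z n * Dn) + W12 * Dn = ((S + W11) * Z n + W12) * Dn := by
        rw [Matrix.add_mul ((S + W11) * Z n) W12 Dn, Matrix.mul_assoc (S + W11) (Z n) Dn]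
      rw [hnum, Matrix.mul_assoc, ← Matrix.mul_assoc Dn,
        Matrix.mul_nonsing_inv Dn hdetD, Matrix.one_mul]
    rw [hZ2]
    have m1 : ‖((S + W11) * Z n + W12) * ((1 + E)⁻¹ * Γ⁻¹)‖
        ≤ ‖(S + W11) * Z n + W12‖ * (‖(1 + E)⁻¹‖ * ‖Γ⁻¹‖) :=
      le_trans (Matrix.l2_opNorm_mul _ _)
        (mul_le_mul_of_nonneg_left (Matrix.l2_opNorm_mul _ _) (norm_nonneg _))
    have m2 : ‖(S + W11) * Z n + W12‖ ≤ t * ‖Z n‖ + 2 * ‖W n‖ := by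
      have a2 : ‖(S + W11) * Z n‖ ≤ (t + ‖W n‖) * ‖Z n‖ :=
        le_trans (Matrix.l2_opNorm_mul _ _)
          (mul_le_mul_of_nonneg_right
            (le_trans (norm_add_le _ _) (add_le_add hS hw11)) (norm_nonneg _))
      have := norm_add_le ((S + W11) * Z n) W12
      nlinarith [norm_nonneg (Z n), norm_nonneg (W n)]
    have m3 : ‖(1 + E)⁻¹‖ * ‖Γ⁻¹‖ ≤ 2 * t / (t + 1) * (t * t)⁻¹ :=
      mul_le_mul hinv2 hΓ' (norm_nonneg _) (by positivity)
    have m4 : (t * ‖Z n‖ + 2 * ‖W n‖) * (2 * t / (t + 1) * (t * t)⁻¹)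
        = c * ‖Z n‖ + C * ‖W n‖ := by
      rw [hc_def, hC_def]; field_simp; ring
    calc ‖((S + W11) * Z n + W12) * ((1 + E)⁻¹ * Γ⁻¹)‖
        ≤ ‖(S + W11) * Z n + W12‖ * (‖(1 + E)⁻¹‖ * ‖Γ⁻¹‖) := m1
      _ ≤ (t * ‖Z n‖ + 2 * ‖W n‖) * (2 * t / (t + 1) * (t * t)⁻¹) := by
          apply mul_le_mul m2 m3 (by positivity) (by positivity)
      _ = c * ‖Z n‖ + C * ‖W n‖ := m4
  have inva : ∀ n, IsUnit (𝒳 n).toBlocks₂₂ ∧ ‖Z n‖ ≤ 1 := by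
    intro n
    induction n with
    | zero =>
      have hD0 : (𝒳 0).toBlocks₂₂ = 1 := by
        rw [h0, ← Matrix.fromBlocks_one, Matrix.toBlocks_fromBlocks₂₂]
      have hB0 : (𝒳 0).toBlocks₁₂ = 0 := by
        rw [h0, ← Matrix.fromBlocks_one, Matrix.toBlocks_fromBlocks₁₂]
      constructor
      · rw [hD0]; exact isUnit_one
      · have hz : Z 0 = (𝒳 0).toBlocks₁₂ * ((𝒳 0).toBlocks₂₂)⁻¹ := rfl
        rw [hz, hB0, Matrix.zero_mul, norm_zero]
        exact zero_le_one
    | succ n ih =>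
      obtain ⟨h1, h2⟩ := ih
      obtain ⟨h3, h4⟩ := step n h1 h2
      refine ⟨h3, le_trans h4 ?_⟩
      have h5 := hW' n
      calc c * ‖Z n‖ + C * ‖W n‖ ≤ c * 1 + C * ((t * t - t) / 4) :=
            add_le_add (mul_le_mul_of_nonneg_left h2 hc0)
              (mul_le_mul_of_nonneg_left h5 hC0)
        _ = 1 := by rw [hc_def, hC_def]; field_simp; ring
  have hWn0 : Tendsto (fun n => ‖W n‖) atTop (nhds 0) := by
    simpa using hW0.norm
  have hb0 : Tendsto (fun n => C * ‖W n‖) atTop (nhds 0) := by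
    simpa using hWn0.const_mul C
  have hfin := tendsto_zero_of_contract (fun n => ‖Z n‖) (fun n => C * ‖W n‖) c hc0 hc1
    (fun n => norm_nonneg _) (fun n => (inva n).2) hb0
    (fun n => (step n (inva n).1 (inva n).2).2)
  exact tendsto_zero_iff_norm_tendsto_zero.mpr hfin
end

section
/- In the setting of the block transfer matrix recursion with ‖S‖ ≤ e^γ, ‖Γ⁻¹‖ ≤ e^{-2γ} and ‖Wₙ‖ ≤ (e^{2γ}−e^γ)/4 for all n, the inverse of the lower-right block satisfies ‖Dₙ⁻¹‖ ≤ ((e^{2γ}+e^γ)/2)^{-n} for all n; in particular Dₙ⁻¹ → 0 as n → ∞. -/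
open scoped Matrix.Norms.L2Operator

namespace Stmt4Aux

open Matrix

variable {l₀ l₁ : ℕ}

/-- inclusion of the second factor as a matrix -/
noncomputable def inrM (l₀ l₁ : ℕ) : Matrix (Fin l₀ ⊕ Fin l₁) (Fin l₁) ℂ :=
  Matrix.of fun i j => if i = Sum.inr j then 1 else 0

/-- inclusion of the first factor as a matrix -/
noncomputable def inlM (l₀ l₁ : ℕ) : Matrix (Fin l₀ ⊕ Fin l₁) (Fin l₀) ℂ :=
  Matrix.of fun i j => if i = Sum.inl j then 1 else 0

lemma inrM_inner : (inrM l₀ l₁)ᴴ * inrM l₀ l₁ = 1 := by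
  ext a b
  simp [inrM, Matrix.mul_apply, Matrix.conjTranspose_apply, Matrix.one_apply,
    Fintype.sum_sum_type, apply_ite (star : ℂ → ℂ), Sum.inr.injEq, eq_comm]

lemma inlM_inner : (inlM l₀ l₁)ᴴ * inlM l₀ l₁ = 1 := by
  ext a b
  simp [inlM, Matrix.mul_apply, Matrix.conjTranspose_apply, Matrix.one_apply,
    Fintype.sum_sum_type, apply_ite (star : ℂ → ℂ), Sum.inl.injEq, eq_comm]

lemma norm_one_le (k : ℕ) : ‖(1 : Matrix (Fin k) (Fin k) ℂ)‖ ≤ 1 := by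
  have h := Matrix.l2_opNorm_conjTranspose_mul_self (1 : Matrix (Fin k) (Fin k) ℂ)
  rw [Matrix.conjTranspose_one, mul_one] at h
  nlinarith [norm_nonneg (1 : Matrix (Fin k) (Fin k) ℂ)]

lemma norm_inrM_le : ‖inrM l₀ l₁‖ ≤ 1 := by
  have h := Matrix.l2_opNorm_conjTranspose_mul_self (inrM l₀ l₁)
  rw [inrM_inner] at h
  nlinarith [norm_nonneg (inrM l₀ l₁), norm_one_le l₁]

lemma norm_inlM_le : ‖inlM l₀ l₁‖ ≤ 1 := by
  have h := Matrix.l2_opNorm_conjTranspose_mul_self (inlM l₀ l₁)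
  rw [inlM_inner] at h
  nlinarith [norm_nonneg (inlM l₀ l₁), norm_one_le l₀]

lemma norm_sandwich_le {p q : ℕ} (A : Matrix (Fin l₀ ⊕ Fin l₁) (Fin l₀ ⊕ Fin l₁) ℂ)
    (P : Matrix (Fin l₀ ⊕ Fin l₁) (Fin p) ℂ) (Q : Matrix (Fin l₀ ⊕ Fin l₁) (Fin q) ℂ)
    (hP : ‖P‖ ≤ 1) (hQ : ‖Q‖ ≤ 1) : ‖Pᴴ * A * Q‖ ≤ ‖A‖ := by
  have h1 := Matrix.l2_opNorm_mul (Pᴴ * A) Q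
  have h2 := Matrix.l2_opNorm_mul Pᴴ A
  have h3 : ‖Pᴴ‖ = ‖P‖ := Matrix.l2_opNorm_conjTranspose P
  nlinarith [norm_nonneg A, norm_nonneg Q, norm_nonneg (Pᴴ * A), norm_nonneg P,
    norm_nonneg (Pᴴ * A * Q)]

lemma toBlocks₁₁_eq (A : Matrix (Fin l₀ ⊕ Fin l₁) (Fin l₀ ⊕ Fin l₁) ℂ) :
    A.toBlocks₁₁ = (inlM l₀ l₁)ᴴ * A * inlM l₀ l₁ := by
  ext a b
  simp [inlM, Matrix.toBlocks₁₁, Matrix.mul_apply, Matrix.conjTranspose_apply,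
    apply_ite (star : ℂ → ℂ), eq_comm]

lemma toBlocks₁₂_eq (A : Matrix (Fin l₀ ⊕ Fin l₁) (Fin l₀ ⊕ Fin l₁) ℂ) :
    A.toBlocks₁₂ = (inlM l₀ l₁)ᴴ * A * inrM l₀ l₁ := by
  ext a b
  simp [inlM, inrM, Matrix.toBlocks₁₂, Matrix.mul_apply, Matrix.conjTranspose_apply,
    apply_ite (star : ℂ → ℂ), eq_comm]

lemma toBlocks₂₁_eq (A : Matrix (Fin l₀ ⊕ Fin l₁) (Fin l₀ ⊕ Fin l₁) ℂ) :
    A.toBlocks₂₁ = (inrM l₀ l₁)ᴴ * A * inlM l₀ l₁ := by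
  ext a b
  simp [inlM, inrM, Matrix.toBlocks₂₁, Matrix.mul_apply, Matrix.conjTranspose_apply,
    apply_ite (star : ℂ → ℂ), eq_comm]

lemma toBlocks₂₂_eq (A : Matrix (Fin l₀ ⊕ Fin l₁) (Fin l₀ ⊕ Fin l₁) ℂ) :
    A.toBlocks₂₂ = (inrM l₀ l₁)ᴴ * A * inrM l₀ l₁ := by
  ext a b
  simp [inrM, Matrix.toBlocks₂₂, Matrix.mul_apply, Matrix.conjTranspose_apply,
    apply_ite (star : ℂ → ℂ), eq_comm]

lemma norm_toBlocks₁₁_le (A : Matrix (Fin l₀ ⊕ Fin l₁) (Fin l₀ ⊕ Fin l₁) ℂ) :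
    ‖A.toBlocks₁₁‖ ≤ ‖A‖ := by
  rw [toBlocks₁₁_eq]; exact norm_sandwich_le A _ _ norm_inlM_le norm_inlM_le

lemma norm_toBlocks₁₂_le (A : Matrix (Fin l₀ ⊕ Fin l₁) (Fin l₀ ⊕ Fin l₁) ℂ) :
    ‖A.toBlocks₁₂‖ ≤ ‖A‖ := by
  rw [toBlocks₁₂_eq]; exact norm_sandwich_le A _ _ norm_inlM_le norm_inrM_le

lemma norm_toBlocks₂₁_le (A : Matrix (Fin l₀ ⊕ Fin l₁) (Fin l₀ ⊕ Fin l₁) ℂ) :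
    ‖A.toBlocks₂₁‖ ≤ ‖A‖ := by
  rw [toBlocks₂₁_eq]; exact norm_sandwich_le A _ _ norm_inrM_le norm_inlM_le

lemma norm_toBlocks₂₂_le (A : Matrix (Fin l₀ ⊕ Fin l₁) (Fin l₀ ⊕ Fin l₁) ℂ) :
    ‖A.toBlocks₂₂‖ ≤ ‖A‖ := by
  rw [toBlocks₂₂_eq]; exact norm_sandwich_le A _ _ norm_inrM_le norm_inrM_le

lemma toBlocks₂₂_mul (X Y : Matrix (Fin l₀ ⊕ Fin l₁) (Fin l₀ ⊕ Fin l₁) ℂ) :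
    (X * Y).toBlocks₂₂ = X.toBlocks₂₁ * Y.toBlocks₁₂ + X.toBlocks₂₂ * Y.toBlocks₂₂ := by
  conv_lhs => rw [← Matrix.fromBlocks_toBlocks X, ← Matrix.fromBlocks_toBlocks Y]
  rw [Matrix.fromBlocks_multiply, Matrix.toBlocks_fromBlocks₂₂]

lemma toBlocks₁₂_mul (X Y : Matrix (Fin l₀ ⊕ Fin l₁) (Fin l₀ ⊕ Fin l₁) ℂ) :
    (X * Y).toBlocks₁₂ = X.toBlocks₁₁ * Y.toBlocks₁₂ + X.toBlocks₁₂ * Y.toBlocks₂₂ := by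
  conv_lhs => rw [← Matrix.fromBlocks_toBlocks X, ← Matrix.fromBlocks_toBlocks Y]
  rw [Matrix.fromBlocks_multiply, Matrix.toBlocks_fromBlocks₁₂]

lemma inv_perturb {k : ℕ} (Γ E : Matrix (Fin k) (Fin k) ℂ) (hΓ : IsUnit Γ) (q : ℝ)
    (hq : ‖Γ⁻¹‖ * ‖E‖ ≤ q) (hq1 : q < 1) :
    IsUnit (Γ + E) ∧ ‖(Γ + E)⁻¹‖ ≤ ‖Γ⁻¹‖ / (1 - q) := by
  have hΓd : IsUnit Γ.det := (Matrix.isUnit_iff_isUnit_det Γ).mp hΓ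
  set X := Γ⁻¹ * E with hX
  have hXnorm : ‖X‖ < 1 := lt_of_le_of_lt (le_trans (Matrix.l2_opNorm_mul _ _) hq) hq1
  have hunit1 : IsUnit (1 + X) := by
    have h := (Units.oneSub (-X) (by rwa [norm_neg])).isUnit
    rwa [Units.val_oneSub, sub_neg_eq_add] at h
  have hfact : Γ + E = Γ * (1 + X) := by
    rw [mul_add, mul_one, hX, ← Matrix.mul_assoc, Matrix.mul_nonsing_inv Γ hΓd, Matrix.one_mul]
  have hunit : IsUnit (Γ + E) := hfact ▸ hΓ.mul hunit1
  refine ⟨hunit, ?_⟩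
  have hd : IsUnit (Γ + E).det := (Matrix.isUnit_iff_isUnit_det _).mp hunit
  set N := (Γ + E)⁻¹ with hN
  have h1 : N * Γ + N * E = 1 := by
    rw [← mul_add]; exact Matrix.nonsing_inv_mul _ hd
  have h2 : N = (1 - N * E) * Γ⁻¹ := by
    have h3 : N * Γ = 1 - N * E := eq_sub_of_add_eq h1
    calc N = N * 1 := (mul_one N).symm
    _ = N * (Γ * Γ⁻¹) := by rw [Matrix.mul_nonsing_inv Γ hΓd]
    _ = N * Γ * Γ⁻¹ := by rw [Matrix.mul_assoc]
    _ = (1 - N * E) * Γ⁻¹ := by rw [h3]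
  have hnorm : ‖N‖ ≤ (1 + ‖N‖ * ‖E‖) * ‖Γ⁻¹‖ := by
    calc ‖N‖ = ‖(1 - N * E) * Γ⁻¹‖ := by rw [← h2]
    _ ≤ ‖1 - N * E‖ * ‖Γ⁻¹‖ := Matrix.l2_opNorm_mul _ _
    _ ≤ (1 + ‖N‖ * ‖E‖) * ‖Γ⁻¹‖ := by
        apply mul_le_mul_of_nonneg_right _ (norm_nonneg _)
        calc ‖1 - N * E‖ ≤ ‖(1 : Matrix (Fin k) (Fin k) ℂ)‖ + ‖N * E‖ := norm_sub_le _ _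
        _ ≤ 1 + ‖N‖ * ‖E‖ := add_le_add (norm_one_le k) (Matrix.l2_opNorm_mul _ _)
  rw [le_div_iff₀ (by linarith)]
  nlinarith [mul_le_mul_of_nonneg_left hq (norm_nonneg N), norm_nonneg N, norm_nonneg (E := ℝ) (‖Γ⁻¹‖)]

end Stmt4Aux

open Stmt4Aux

set_option maxHeartbeats 1000000 in
/-- In the block transfer-matrix recursion, `‖Dₙ⁻¹‖ ≤ ((e^{2γ}+e^γ)/2)^{-n}`
for all `n`, and in particular `Dₙ⁻¹ → 0`. -/
theorem stmt4 (l₀ l₁ : ℕ) (γ : ℝ) (hγ : 0 < γ)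
    (S : Matrix (Fin l₀) (Fin l₀) ℂ) (Γ : Matrix (Fin l₁) (Fin l₁) ℂ)
    (hS : ‖S‖ ≤ Real.exp γ)
    (hΓunit : IsUnit Γ) (hΓ : ‖Γ⁻¹‖ ≤ Real.exp (-(2 * γ)))
    (W : ℕ → Matrix (Fin l₀ ⊕ Fin l₁) (Fin l₀ ⊕ Fin l₁) ℂ)
    (hW : ∀ n, ‖W n‖ ≤ (Real.exp (2 * γ) - Real.exp γ) / 4)
    (𝒳 : ℕ → Matrix (Fin l₀ ⊕ Fin l₁) (Fin l₀ ⊕ Fin l₁) ℂ)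
    (h0 : 𝒳 0 = 1)
    (hrec : ∀ n, 𝒳 (n + 1) = (Matrix.fromBlocks S 0 0 Γ + W n) * 𝒳 n) :
    (∀ n, ‖((𝒳 n).toBlocks₂₂)⁻¹‖ ≤ (((Real.exp (2 * γ) + Real.exp γ) / 2)⁻¹) ^ n) ∧
      Filter.Tendsto (fun n => ((𝒳 n).toBlocks₂₂)⁻¹) Filter.atTop (nhds 0) := by
  set r : ℝ := (Real.exp (2 * γ) + Real.exp γ) / 2 with hr
  set ε : ℝ := (Real.exp (2 * γ) - Real.exp γ) / 4 with hε
  have hexp1 : (1 : ℝ) < Real.exp γ := by nlinarith [Real.add_one_le_exp γ]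
  have hexp2 : Real.exp γ < Real.exp (2 * γ) := Real.exp_lt_exp.mpr (by linarith)
  have hmulid : Real.exp (-(2 * γ)) * Real.exp (2 * γ) = 1 := by
    rw [← Real.exp_add]; simp
  have hmulid2 : Real.exp (-(2 * γ)) * Real.exp γ = Real.exp (-γ) := by
    rw [← Real.exp_add]; ring_nf
  have hexpneg : Real.exp (-γ) < 1 := Real.exp_lt_one_iff.mpr (by linarith)
  have hexpnegpos : 0 < Real.exp (-γ) := Real.exp_pos _
  have hr1 : 1 < r := by rw [hr]; linarith
  have hrpos : 0 < r := by linarith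
  have hεpos : 0 < ε := by rw [hε]; linarith
  -- key induction
  have key : ∀ n, IsUnit ((𝒳 n).toBlocks₂₂) ∧ ‖((𝒳 n).toBlocks₂₂)⁻¹‖ ≤ (r⁻¹) ^ n ∧
      ‖(𝒳 n).toBlocks₁₂ * ((𝒳 n).toBlocks₂₂)⁻¹‖ ≤ 1 := by
    intro n
    induction n with
    | zero =>
      have hD : (𝒳 0).toBlocks₂₂ = 1 := by
        rw [h0, ← Matrix.fromBlocks_one, Matrix.toBlocks_fromBlocks₂₂]
      have hB : (𝒳 0).toBlocks₁₂ = 0 := by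
        rw [h0, ← Matrix.fromBlocks_one, Matrix.toBlocks_fromBlocks₁₂]
      refine ⟨by rw [hD]; exact isUnit_one, ?_, ?_⟩
      · have h1 : (1 : Matrix (Fin l₁) (Fin l₁) ℂ)⁻¹ = 1 := Matrix.inv_eq_right_inv (by rw [one_mul])
        rw [hD, h1, pow_zero]; exact norm_one_le l₁
      · rw [hB, Matrix.zero_mul, norm_zero]; exact zero_le_one
    | succ n ih =>
      obtain ⟨hu, hDn, hZn⟩ := ih
      have hud : IsUnit ((𝒳 n).toBlocks₂₂).det := (Matrix.isUnit_iff_isUnit_det _).mp hu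
      set Dn := (𝒳 n).toBlocks₂₂ with hDndef
      set Bn := (𝒳 n).toBlocks₁₂ with hBndef
      set Z := Bn * Dn⁻¹ with hZ
      set T := Matrix.fromBlocks S 0 0 Γ with hT
      set a := (W n).toBlocks₁₁ with ha
      set b := (W n).toBlocks₁₂ with hb
      set c := (W n).toBlocks₂₁ with hc
      set d := (W n).toBlocks₂₂ with hd
      -- block norms of W n
      have hna : ‖a‖ ≤ ε := le_trans (norm_toBlocks₁₁_le _) (hW n)
      have hnb : ‖b‖ ≤ ε := le_trans (norm_toBlocks₁₂_le _) (hW n)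
      have hnc : ‖c‖ ≤ ε := le_trans (norm_toBlocks₂₁_le _) (hW n)
      have hnd : ‖d‖ ≤ ε := le_trans (norm_toBlocks₂₂_le _) (hW n)
      -- blocks of T + W n
      have hTW11 : (T + W n).toBlocks₁₁ = S + a := by
        rw [hT]; ext i j
        simp [Matrix.toBlocks₁₁, Matrix.fromBlocks, ha]
      have hTW12 : (T + W n).toBlocks₁₂ = b := by
        rw [hT]; ext i j
        simp [Matrix.toBlocks₁₂, Matrix.fromBlocks, hb]
      have hTW21 : (T + W n).toBlocks₂₁ = c := by
        rw [hT]; ext i j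
        simp [Matrix.toBlocks₂₁, Matrix.fromBlocks, hc]
      have hTW22 : (T + W n).toBlocks₂₂ = Γ + d := by
        rw [hT]; ext i j
        simp [Matrix.toBlocks₂₂, Matrix.fromBlocks, hd]
      -- recursion for blocks
      have hDrec : (𝒳 (n+1)).toBlocks₂₂ = c * Bn + (Γ + d) * Dn := by
        rw [hrec n, toBlocks₂₂_mul, hTW21, hTW22]
      have hBrec : (𝒳 (n+1)).toBlocks₁₂ = (S + a) * Bn + b * Dn := by
        rw [hrec n, toBlocks₁₂_mul, hTW11, hTW12]
      -- Bn = Z * Dn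
      have hBnZ : Bn = Z * Dn := by
        rw [hZ, Matrix.mul_assoc, Matrix.nonsing_inv_mul _ hud, Matrix.mul_one]
      have hDfact : (𝒳 (n+1)).toBlocks₂₂ = (Γ + (d + c * Z)) * Dn := by
        rw [hDrec, hBnZ, Matrix.add_mul, Matrix.add_mul, Matrix.add_mul,
          ← Matrix.mul_assoc c Z Dn]
        abel
      -- bound on (d + c * Z)
      have hZnorm : ‖Z‖ ≤ 1 := hZn
      have hEnorm : ‖(d + c * Z)‖ ≤ 2 * ε := by
        calc ‖(d + c * Z)‖ ≤ ‖d‖ + ‖c * Z‖ := norm_add_le _ _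
        _ ≤ ‖d‖ + ‖c‖ * ‖Z‖ := by linarith [Matrix.l2_opNorm_mul c Z]
        _ ≤ ε + ε * 1 := by
            refine add_le_add hnd ?_
            exact mul_le_mul hnc hZnorm (norm_nonneg _) hεpos.le
        _ = 2 * ε := by ring
      -- perturbation
      set q : ℝ := Real.exp (-(2*γ)) * (2 * ε) with hq
      have hΓpos : (0:ℝ) ≤ ‖Γ⁻¹‖ := norm_nonneg _
      have hqmaj : ‖Γ⁻¹‖ * ‖(d + c * Z)‖ ≤ q := by
        rw [hq]
        apply mul_le_mul hΓ hEnorm (norm_nonneg _) (Real.exp_pos _).le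
      have hqval : q = (1 - Real.exp (-γ)) / 2 := by
        rw [hq, hε]; field_simp; nlinarith [hmulid, hmulid2]
      have hq1 : q < 1 := by rw [hqval]; linarith
      obtain ⟨hMu, hMnorm⟩ := inv_perturb Γ (d + c * Z) hΓunit q hqmaj hq1
      have hMud : IsUnit (Γ + (d + c * Z)).det := (Matrix.isUnit_iff_isUnit_det _).mp hMu
      -- bound ‖(Γ+(d + c * Z))⁻¹‖ ≤ r⁻¹
      have h1q : (0:ℝ) < 1 - q := by rw [hqval]; linarith
      have heq : Real.exp (-(2*γ)) * r = 1 - q := by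
        rw [hqval, hr]
        nlinarith [hmulid, hmulid2]
      have hMinv : ‖(Γ + (d + c * Z))⁻¹‖ ≤ r⁻¹ := by
        refine le_trans hMnorm ?_
        rw [div_le_iff₀ h1q, ← heq, mul_comm (Real.exp (-(2*γ))) r, ← mul_assoc,
          inv_mul_cancel₀ (ne_of_gt hrpos), one_mul]
        exact hΓ
      -- new unit
      have hunit' : IsUnit ((𝒳 (n+1)).toBlocks₂₂) := by
        rw [hDfact]; exact hMu.mul hu
      have hinv' : ((𝒳 (n+1)).toBlocks₂₂)⁻¹ = Dn⁻¹ * (Γ + (d + c * Z))⁻¹ := by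
        rw [hDfact, Matrix.mul_inv_rev]
      have hMinvpos : (0:ℝ) ≤ ‖(Γ + (d + c * Z))⁻¹‖ := norm_nonneg _
      have hrinvpos : (0:ℝ) ≤ r⁻¹ := by positivity
      have hDbound : ‖((𝒳 (n+1)).toBlocks₂₂)⁻¹‖ ≤ (r⁻¹) ^ (n+1) := by
        rw [hinv', pow_succ]
        calc ‖Dn⁻¹ * (Γ + (d + c * Z))⁻¹‖ ≤ ‖Dn⁻¹‖ * ‖(Γ + (d + c * Z))⁻¹‖ := Matrix.l2_opNorm_mul _ _
        _ ≤ (r⁻¹)^n * r⁻¹ := mul_le_mul hDn hMinv (norm_nonneg _) (by positivity)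
      refine ⟨hunit', hDbound, ?_⟩
      -- Z recursion
      have hDD : Dn * Dn⁻¹ = 1 := Matrix.mul_nonsing_inv _ hud
      have hBfact : (𝒳 (n+1)).toBlocks₁₂ = ((S + a) * Z + b) * Dn := by
        rw [hBrec, hBnZ]
        simp only [Matrix.add_mul, Matrix.mul_assoc]
      have hZrec : (𝒳 (n+1)).toBlocks₁₂ * ((𝒳 (n+1)).toBlocks₂₂)⁻¹
          = ((S + a) * Z + b) * (Γ + (d + c * Z))⁻¹ := by
        rw [hBfact, hinv', Matrix.mul_assoc, ← Matrix.mul_assoc Dn, hDD, Matrix.one_mul]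
      rw [hZrec]
      have hnum : ‖(S + a) * Z + b‖ ≤ r := by
        have h1 : ‖(S + a) * Z‖ ≤ (Real.exp γ + ε) * 1 := by
          calc ‖(S + a) * Z‖ ≤ ‖S + a‖ * ‖Z‖ := Matrix.l2_opNorm_mul _ _
          _ ≤ (Real.exp γ + ε) * 1 := by
              apply mul_le_mul _ hZnorm (norm_nonneg _) (by positivity)
              calc ‖S + a‖ ≤ ‖S‖ + ‖a‖ := norm_add_le _ _
              _ ≤ Real.exp γ + ε := add_le_add hS hna
        calc ‖(S + a) * Z + b‖ ≤ ‖(S + a) * Z‖ + ‖b‖ := norm_add_le _ _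
        _ ≤ (Real.exp γ + ε) * 1 + ε := add_le_add h1 hnb
        _ ≤ r := by rw [hr, hε]; ring_nf; linarith
      calc ‖((S + a) * Z + b) * (Γ + (d + c * Z))⁻¹‖ ≤ ‖(S + a) * Z + b‖ * ‖(Γ + (d + c * Z))⁻¹‖ :=
            Matrix.l2_opNorm_mul _ _
      _ ≤ r * r⁻¹ := mul_le_mul hnum hMinv (norm_nonneg _) hrpos.le
      _ = 1 := mul_inv_cancel₀ (ne_of_gt hrpos)
  refine ⟨fun n => (key n).2.1, ?_⟩
  apply squeeze_zero_norm (fun n => (key n).2.1)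
  exact tendsto_pow_atTop_nhds_zero_of_lt_one (by positivity) (inv_lt_one_of_one_lt₀ hr1)
end

section
/- In the setting of the block transfer matrix recursion, if additionally Wₙ → 0, then the limit Y := lim_{n→∞} Dₙ⁻¹Cₙ exists; moreover Dₙ⁻¹Cₙ = Σ_{k=0}^{n-1} D_{k+1}⁻¹ c_k X_k where Xₙ = Aₙ − BₙDₙ⁻¹Cₙ is the Schur complement, and the series converges absolutely. -/
open scoped Matrix.Norms.L2Operator

namespace Stmt5Aux

open Matrix

variable {l₀ l₁ k m : ℕ}

lemma norm_one_le (k : ℕ) : ‖(1 : Matrix (Fin k) (Fin k) ℂ)‖ ≤ 1 := by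
  rw [Matrix.cstar_norm_def, _root_.map_one, ContinuousLinearMap.one_def]
  exact ContinuousLinearMap.norm_id_le

lemma isUnit_one_add (R : Matrix (Fin k) (Fin k) ℂ) (h : ‖R‖ < 1) : IsUnit (1 + R) := by
  have := isUnit_one_sub_of_norm_lt_one (x := -R) (by simpa using h)
  simpa [sub_neg_eq_add] using this

lemma norm_inv_one_add (R : Matrix (Fin k) (Fin k) ℂ) (h : ‖R‖ < 1) :
    ‖(1 + R)⁻¹‖ ≤ (1 - ‖R‖)⁻¹ := by
  have h' : ‖-R‖ < 1 := by simpa using h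
  have e1 : (1 : Matrix (Fin k) (Fin k) ℂ) + R = 1 - (-R) := (sub_neg_eq_add 1 R).symm
  rw [e1, Matrix.nonsing_inv_eq_ringInverse, ← geom_series_eq_inverse (-R) h']
  have := tsum_geometric_le_of_norm_lt_one (-R) h'
  have h1 := norm_one_le k
  rw [norm_neg] at this
  linarith

def prL (l₀ l₁ : ℕ) : Matrix (Fin l₀) (Fin l₀ ⊕ Fin l₁) ℂ :=
  Matrix.of fun i j => if j = Sum.inl i then 1 else 0

def prR (l₀ l₁ : ℕ) : Matrix (Fin l₁) (Fin l₀ ⊕ Fin l₁) ℂ :=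
  Matrix.of fun i j => if j = Sum.inr i then 1 else 0

lemma prL_mul_conjTranspose : prL l₀ l₁ * (prL l₀ l₁)ᴴ = 1 := by
  ext i j
  simp [prL, Matrix.mul_apply, Matrix.conjTranspose_apply, Fintype.sum_sum_type,
    apply_ite (starRingEnd ℂ), ite_mul, mul_ite, Matrix.one_apply, Sum.inl.injEq, eq_comm]

lemma prR_mul_conjTranspose : prR l₀ l₁ * (prR l₀ l₁)ᴴ = 1 := by
  ext i j
  simp [prR, Matrix.mul_apply, Matrix.conjTranspose_apply, Fintype.sum_sum_type,
    apply_ite (starRingEnd ℂ), ite_mul, mul_ite, Matrix.one_apply, Sum.inr.injEq, eq_comm]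

lemma norm_prL_conjTranspose_le : ‖(prL l₀ l₁)ᴴ‖ ≤ 1 := by
  have h2 := Matrix.l2_opNorm_conjTranspose_mul_self (prL l₀ l₁)ᴴ
  rw [Matrix.conjTranspose_conjTranspose, prL_mul_conjTranspose] at h2
  nlinarith [norm_nonneg (prL l₀ l₁)ᴴ, norm_one_le l₀]

lemma norm_prR_conjTranspose_le : ‖(prR l₀ l₁)ᴴ‖ ≤ 1 := by
  have h2 := Matrix.l2_opNorm_conjTranspose_mul_self (prR l₀ l₁)ᴴ
  rw [Matrix.conjTranspose_conjTranspose, prR_mul_conjTranspose] at h2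
  nlinarith [norm_nonneg (prR l₀ l₁)ᴴ, norm_one_le l₁]

lemma norm_prL_le : ‖prL l₀ l₁‖ ≤ 1 := by
  rw [← Matrix.l2_opNorm_conjTranspose]; exact norm_prL_conjTranspose_le

lemma norm_prR_le : ‖prR l₀ l₁‖ ≤ 1 := by
  rw [← Matrix.l2_opNorm_conjTranspose]; exact norm_prR_conjTranspose_le

lemma toBlocks₁₁_eq (M : Matrix (Fin l₀ ⊕ Fin l₁) (Fin l₀ ⊕ Fin l₁) ℂ) :
    M.toBlocks₁₁ = prL l₀ l₁ * M * (prL l₀ l₁)ᴴ := by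
  ext i j
  simp [prL, Matrix.mul_apply, Matrix.toBlocks₁₁, Matrix.conjTranspose_apply,
    Fintype.sum_sum_type, apply_ite (starRingEnd ℂ), ite_mul, mul_ite]

lemma toBlocks₁₂_eq (M : Matrix (Fin l₀ ⊕ Fin l₁) (Fin l₀ ⊕ Fin l₁) ℂ) :
    M.toBlocks₁₂ = prL l₀ l₁ * M * (prR l₀ l₁)ᴴ := by
  ext i j
  simp [prL, prR, Matrix.mul_apply, Matrix.toBlocks₁₂, Matrix.conjTranspose_apply,
    Fintype.sum_sum_type, apply_ite (starRingEnd ℂ), ite_mul, mul_ite]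

lemma toBlocks₂₁_eq (M : Matrix (Fin l₀ ⊕ Fin l₁) (Fin l₀ ⊕ Fin l₁) ℂ) :
    M.toBlocks₂₁ = prR l₀ l₁ * M * (prL l₀ l₁)ᴴ := by
  ext i j
  simp [prL, prR, Matrix.mul_apply, Matrix.toBlocks₂₁, Matrix.conjTranspose_apply,
    Fintype.sum_sum_type, apply_ite (starRingEnd ℂ), ite_mul, mul_ite]

lemma toBlocks₂₂_eq (M : Matrix (Fin l₀ ⊕ Fin l₁) (Fin l₀ ⊕ Fin l₁) ℂ) :
    M.toBlocks₂₂ = prR l₀ l₁ * M * (prR l₀ l₁)ᴴ := by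
  ext i j
  simp [prR, Matrix.mul_apply, Matrix.toBlocks₂₂, Matrix.conjTranspose_apply,
    Fintype.sum_sum_type, apply_ite (starRingEnd ℂ), ite_mul, mul_ite]

lemma norm_mul₃_le' {a b c d : Type*} [Fintype a] [Fintype b] [Fintype c] [Fintype d]
    [DecidableEq b] [DecidableEq c] [DecidableEq d] (P : Matrix a b ℂ)
    (M : Matrix b c ℂ) (Q : Matrix c d ℂ) :
    ‖P * M * Q‖ ≤ ‖P‖ * ‖M‖ * ‖Q‖ := by
  calc ‖P * M * Q‖ ≤ ‖P * M‖ * ‖Q‖ := Matrix.l2_opNorm_mul _ _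
    _ ≤ ‖P‖ * ‖M‖ * ‖Q‖ := by
        have := Matrix.l2_opNorm_mul P M
        nlinarith [norm_nonneg Q, norm_nonneg (P * M)]

lemma norm_pmq_le {a b c d : Type*} [Fintype a] [Fintype b] [Fintype c] [Fintype d]
    [DecidableEq b] [DecidableEq c] [DecidableEq d] (P : Matrix a b ℂ)
    (M : Matrix b c ℂ) (Q : Matrix c d ℂ)
    (hP : ‖P‖ ≤ 1) (hQ : ‖Q‖ ≤ 1) : ‖P * M * Q‖ ≤ ‖M‖ := by
  calc ‖P * M * Q‖ ≤ ‖P‖ * ‖M‖ * ‖Q‖ := norm_mul₃_le' P M Q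
    _ ≤ 1 * ‖M‖ * 1 := by gcongr <;> positivity
    _ = ‖M‖ := by ring

lemma norm_toBlocks₁₁_le (M : Matrix (Fin l₀ ⊕ Fin l₁) (Fin l₀ ⊕ Fin l₁) ℂ) :
    ‖M.toBlocks₁₁‖ ≤ ‖M‖ := by
  rw [toBlocks₁₁_eq]; exact norm_pmq_le _ _ _ norm_prL_le norm_prL_conjTranspose_le

lemma norm_toBlocks₁₂_le (M : Matrix (Fin l₀ ⊕ Fin l₁) (Fin l₀ ⊕ Fin l₁) ℂ) :
    ‖M.toBlocks₁₂‖ ≤ ‖M‖ := by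
  rw [toBlocks₁₂_eq]; exact norm_pmq_le _ _ _ norm_prL_le norm_prR_conjTranspose_le

lemma norm_toBlocks₂₁_le (M : Matrix (Fin l₀ ⊕ Fin l₁) (Fin l₀ ⊕ Fin l₁) ℂ) :
    ‖M.toBlocks₂₁‖ ≤ ‖M‖ := by
  rw [toBlocks₂₁_eq]; exact norm_pmq_le _ _ _ norm_prR_le norm_prL_conjTranspose_le

lemma norm_toBlocks₂₂_le (M : Matrix (Fin l₀ ⊕ Fin l₁) (Fin l₀ ⊕ Fin l₁) ℂ) :
    ‖M.toBlocks₂₂‖ ≤ ‖M‖ := by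
  rw [toBlocks₂₂_eq]; exact norm_pmq_le _ _ _ norm_prR_le norm_prR_conjTranspose_le

lemma cancel_left {k : ℕ} {α : Type*} [Fintype α] {M N : Matrix (Fin k) (Fin k) ℂ}
    (h : M * N = 1) (P : Matrix (Fin k) α ℂ) : M * (N * P) = P := by
  rw [← Matrix.mul_assoc, h, Matrix.one_mul]




set_option maxHeartbeats 2000000 in
lemma step {l₀ l₁ : ℕ} {γ : ℝ} (hγ : 0 < γ)
    {S : Matrix (Fin l₀) (Fin l₀) ℂ} {Γ : Matrix (Fin l₁) (Fin l₁) ℂ}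
    (hS : ‖S‖ ≤ Real.exp γ) (hΓunit : IsUnit Γ) (hΓ : ‖Γ⁻¹‖ ≤ Real.exp (-(2 * γ)))
    {A A' : Matrix (Fin l₀) (Fin l₀) ℂ} {B B' : Matrix (Fin l₀) (Fin l₁) ℂ}
    {C C' : Matrix (Fin l₁) (Fin l₀) ℂ} {D D' : Matrix (Fin l₁) (Fin l₁) ℂ}
    {a : Matrix (Fin l₀) (Fin l₀) ℂ} {b : Matrix (Fin l₀) (Fin l₁) ℂ}
    {c : Matrix (Fin l₁) (Fin l₀) ℂ} {d : Matrix (Fin l₁) (Fin l₁) ℂ} {w : ℝ}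
    (ha : ‖a‖ ≤ w) (hb : ‖b‖ ≤ w) (hc : ‖c‖ ≤ w) (hd : ‖d‖ ≤ w)
    (hw : w ≤ (Real.exp (2 * γ) - Real.exp γ) / 4)
    (hA' : A' = (S + a) * A + b * C) (hB' : B' = (S + a) * B + b * D)
    (hC' : C' = c * A + (Γ + d) * C) (hD'rec : D' = c * B + (Γ + d) * D)
    (hD : IsUnit D) (hQ : ‖B * D⁻¹‖ ≤ 1) :
    IsUnit D' ∧ ‖B' * D'⁻¹‖ ≤ 1 ∧
      ‖D'⁻¹‖ ≤ Real.exp (-(2 * γ)) / (1 - 2 * w * Real.exp (-(2 * γ))) * ‖D⁻¹‖ ∧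
      ‖A' - B' * D'⁻¹ * C'‖ ≤ (Real.exp γ + 2 * w) * ‖A - B * D⁻¹ * C‖ ∧
      D'⁻¹ * C' = D⁻¹ * C + D'⁻¹ * c * (A - B * D⁻¹ * C) := by
  -- real number preliminaries
  have hw0 : 0 ≤ w := (norm_nonneg a).trans ha
  set u := Real.exp γ with hu_def
  have hu1 : 1 < u := by
    rw [hu_def, ← Real.exp_zero]; exact Real.exp_lt_exp.mpr hγ
  have hu0 : 0 < u := by linarith
  have h2γ : Real.exp (2 * γ) = u ^ 2 := by
    rw [two_mul, Real.exp_add]; ring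
  set t := Real.exp (-(2 * γ)) with ht_def
  have ht : t = (u ^ 2)⁻¹ := by rw [ht_def, Real.exp_neg, h2γ]
  have ht0 : 0 < t := Real.exp_pos _
  have htu : t * u ^ 2 = 1 := by rw [ht]; field_simp
  have hw4 : 4 * w ≤ u ^ 2 - u := by rw [h2γ] at hw; linarith
  have hwt0 : 0 ≤ w * t := mul_nonneg hw0 ht0.le
  have hkey : u * t + 4 * w * t ≤ 1 := by
    nlinarith [mul_le_mul_of_nonneg_right hw4 ht0.le, htu]
  have hut0 : 0 < u * t := mul_pos hu0 ht0
  have h2wt : 2 * w * t < 1 := by linarith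
  have hden : 0 < 1 - 2 * w * t := by linarith
  -- matrix preliminaries
  have hDdet : IsUnit D.det := (Matrix.isUnit_iff_isUnit_det D).mp hD
  have hDD : D⁻¹ * D = 1 := Matrix.nonsing_inv_mul D hDdet
  have hDD' : D * D⁻¹ = 1 := Matrix.mul_nonsing_inv D hDdet
  have hΓdet : IsUnit Γ.det := (Matrix.isUnit_iff_isUnit_det Γ).mp hΓunit
  have hΓΓ : Γ⁻¹ * Γ = 1 := Matrix.nonsing_inv_mul Γ hΓdet
  set Q : Matrix (Fin l₀) (Fin l₁) ℂ := B * D⁻¹ with hQdef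
  set E : Matrix (Fin l₁) (Fin l₁) ℂ := d + c * Q with hEdef
  have hcQ : ‖c * Q‖ ≤ w := by
    have h1 := Matrix.l2_opNorm_mul c Q
    nlinarith [norm_nonneg c]
  have hE : ‖E‖ ≤ 2 * w := by
    have := norm_add_le d (c * Q)
    linarith
  have hEΓ : ‖E * Γ⁻¹‖ ≤ 2 * w * t := by
    calc ‖E * Γ⁻¹‖ ≤ ‖E‖ * ‖Γ⁻¹‖ := Matrix.l2_opNorm_mul E Γ⁻¹
      _ ≤ 2 * w * t := mul_le_mul hE hΓ (norm_nonneg _) (by linarith)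
  have hEΓlt : ‖E * Γ⁻¹‖ < 1 := lt_of_le_of_lt hEΓ h2wt
  have hGE1unit : IsUnit (1 + E * Γ⁻¹) := isUnit_one_add _ hEΓlt
  have hfact : Γ + E = (1 + E * Γ⁻¹) * Γ := by
    rw [Matrix.add_mul, Matrix.one_mul, Matrix.mul_assoc, hΓΓ, Matrix.mul_one]
  have hGEunit : IsUnit (Γ + E) := by rw [hfact]; exact hGE1unit.mul hΓunit
  have hGEdet : IsUnit (Γ + E).det := (Matrix.isUnit_iff_isUnit_det _).mp hGEunit
  have hGEinv : (Γ + E)⁻¹ = Γ⁻¹ * (1 + E * Γ⁻¹)⁻¹ := by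
    rw [hfact, Matrix.mul_inv_rev]
  have hGEnorm : ‖(Γ + E)⁻¹‖ ≤ t / (1 - 2 * w * t) := by
    rw [hGEinv]
    have h1 := Matrix.l2_opNorm_mul Γ⁻¹ (1 + E * Γ⁻¹)⁻¹
    have h2 := norm_inv_one_add _ hEΓlt
    have h3 : (1 - ‖E * Γ⁻¹‖)⁻¹ ≤ (1 - 2 * w * t)⁻¹ := by
      apply inv_anti₀ hden
      linarith
    have h4 : 0 ≤ ‖(1 + E * Γ⁻¹)⁻¹‖ := norm_nonneg _
    have h5 : 0 ≤ ‖(Γ⁻¹ : Matrix (Fin l₁) (Fin l₁) ℂ)‖ := norm_nonneg _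
    calc ‖Γ⁻¹ * (1 + E * Γ⁻¹)⁻¹‖ ≤ ‖(Γ⁻¹ : Matrix (Fin l₁) (Fin l₁) ℂ)‖ * ‖(1 + E * Γ⁻¹)⁻¹‖ := h1
      _ ≤ t * (1 - 2 * w * t)⁻¹ := by
          apply mul_le_mul hΓ (le_trans h2 h3) h4 ht0.le
      _ = t / (1 - 2 * w * t) := by rw [div_eq_mul_inv]
  -- factor D'
  have hBD : B * D⁻¹ * D = B := by rw [Matrix.mul_assoc, hDD, Matrix.mul_one]
  have hD'fact : D' = (Γ + E) * D := by
    rw [hD'rec, hEdef, hQdef]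
    have hexp : (Γ + (d + c * (B * D⁻¹))) * D = Γ * D + (d * D + c * (B * D⁻¹ * D)) := by
      rw [Matrix.add_mul, Matrix.add_mul, Matrix.mul_assoc]
    rw [hexp, hBD, Matrix.add_mul]
    abel
  have hD'unit : IsUnit D' := by rw [hD'fact]; exact hGEunit.mul hD
  have hD'inv : D'⁻¹ = D⁻¹ * (Γ + E)⁻¹ := by rw [hD'fact, Matrix.mul_inv_rev]
  have hD'norm : ‖D'⁻¹‖ ≤ t / (1 - 2 * w * t) * ‖D⁻¹‖ := by
    rw [hD'inv]
    have h1 := Matrix.l2_opNorm_mul D⁻¹ (Γ + E)⁻¹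
    have h2 : ‖D⁻¹‖ * ‖(Γ + E)⁻¹‖ ≤ ‖D⁻¹‖ * (t / (1 - 2 * w * t)) :=
      mul_le_mul_of_nonneg_left hGEnorm (norm_nonneg _)
    calc ‖D⁻¹ * (Γ + E)⁻¹‖ ≤ ‖D⁻¹‖ * ‖(Γ + E)⁻¹‖ := h1
      _ ≤ ‖D⁻¹‖ * (t / (1 - 2 * w * t)) := h2
      _ = t / (1 - 2 * w * t) * ‖D⁻¹‖ := mul_comm _ _
  -- B' D'⁻¹
  have hQ' : B' * D'⁻¹ = ((S + a) * Q + b) * (Γ + E)⁻¹ := by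
    rw [hB', hD'inv, ← Matrix.mul_assoc]
    congr 1
    rw [Matrix.add_mul, Matrix.mul_assoc (S + a) B D⁻¹, Matrix.mul_assoc b D D⁻¹, hDD',
      Matrix.mul_one, hQdef]
  have hQ'norm : ‖B' * D'⁻¹‖ ≤ 1 := by
    rw [hQ']
    have h1 := Matrix.l2_opNorm_mul ((S + a) * Q + b) (Γ + E)⁻¹
    have h2 : ‖(S + a) * Q + b‖ ≤ u + 2 * w := by
      have hSa : ‖S + a‖ ≤ u + w := by
        have := norm_add_le S a
        linarith
      have h4 : ‖(S + a) * Q‖ ≤ (u + w) * 1 := by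
        have h4a := Matrix.l2_opNorm_mul (S + a) Q
        have h4b : ‖S + a‖ * ‖Q‖ ≤ (u + w) * 1 :=
          mul_le_mul hSa hQ (norm_nonneg _) (by linarith)
        linarith
      have h4c := norm_add_le ((S + a) * Q) b
      linarith
    have h6 : 0 ≤ u + 2 * w := by linarith
    have h7 : ‖((S + a) * Q + b) * (Γ + E)⁻¹‖ ≤ (u + 2 * w) * (t / (1 - 2 * w * t)) := by
      calc ‖((S + a) * Q + b) * (Γ + E)⁻¹‖ ≤ ‖(S + a) * Q + b‖ * ‖(Γ + E)⁻¹‖ := h1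
        _ ≤ (u + 2 * w) * (t / (1 - 2 * w * t)) :=
            mul_le_mul h2 hGEnorm (norm_nonneg _) h6
    have h8 : (u + 2 * w) * (t / (1 - 2 * w * t)) ≤ 1 := by
      rw [mul_div_assoc']
      rw [div_le_one hden]
      nlinarith
    linarith
  -- the C' factored form
  have hGEGE : (Γ + E)⁻¹ * (Γ + E) = 1 := Matrix.nonsing_inv_mul _ hGEdet
  set X : Matrix (Fin l₀) (Fin l₀) ℂ := A - B * D⁻¹ * C with hXdef
  have hr : C' = (Γ + E) * C + c * X := by
    simp only [hXdef, hC', hEdef, hQdef, Matrix.add_mul, Matrix.mul_sub, Matrix.mul_assoc]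
    abel
  have hident : D'⁻¹ * C' = D⁻¹ * C + D'⁻¹ * c * X := by
    simp only [hr, hD'inv, Matrix.mul_add, Matrix.mul_assoc, cancel_left hGEGE]
  -- Schur complement recursion
  have hX' : A' - B' * D'⁻¹ * C' = (S + a - B' * D'⁻¹ * c) * X := by
    rw [hQ']
    have hmid : ((S + a) * Q + b) * (Γ + E)⁻¹ * C' =
        ((S + a) * Q + b) * C + ((S + a) * Q + b) * ((Γ + E)⁻¹ * (c * X)) := by
      rw [hr, Matrix.mul_assoc ((S + a) * Q + b) (Γ + E)⁻¹, Matrix.mul_add,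
        cancel_left hGEGE C, Matrix.mul_add]
    rw [hmid]
    simp only [hA', hXdef, hQdef, Matrix.mul_add, Matrix.add_mul, Matrix.mul_sub,
      Matrix.sub_mul, Matrix.mul_assoc]
    abel
  have hX'norm : ‖A' - B' * D'⁻¹ * C'‖ ≤ (u + 2 * w) * ‖A - B * D⁻¹ * C‖ := by
    rw [hX', ← hXdef]
    have h1 := Matrix.l2_opNorm_mul (S + a - B' * D'⁻¹ * c) X
    have h2 : ‖S + a - B' * D'⁻¹ * c‖ ≤ u + 2 * w := by
      have h3 := norm_sub_le (S + a) (B' * D'⁻¹ * c)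
      have h4 := norm_add_le S a
      have h5 := Matrix.l2_opNorm_mul (B' * D'⁻¹) c
      nlinarith [norm_nonneg (B' * D'⁻¹), norm_nonneg c]
    nlinarith [norm_nonneg X, norm_nonneg (S + a - B' * D'⁻¹ * c)]
  exact ⟨hD'unit, hQ'norm, hD'norm, hX'norm, hident⟩


end Stmt5Aux

set_option maxHeartbeats 2000000 in
/-- If additionally `Wₙ → 0`, the limit `Y = lim Dₙ⁻¹ Cₙ` exists; moreover
`Dₙ⁻¹ Cₙ = Σ_{k<n} D_{k+1}⁻¹ c_k X_k` where `Xₙ` is the Schur complement, and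
the series converges absolutely. -/
theorem stmt5 (l₀ l₁ : ℕ) (γ : ℝ) (hγ : 0 < γ)
    (S : Matrix (Fin l₀) (Fin l₀) ℂ) (Γ : Matrix (Fin l₁) (Fin l₁) ℂ)
    (hS : ‖S‖ ≤ Real.exp γ)
    (hΓunit : IsUnit Γ) (hΓ : ‖Γ⁻¹‖ ≤ Real.exp (-(2 * γ)))
    (W : ℕ → Matrix (Fin l₀ ⊕ Fin l₁) (Fin l₀ ⊕ Fin l₁) ℂ)
    (hW : ∀ n, ‖W n‖ ≤ (Real.exp (2 * γ) - Real.exp γ) / 4)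
    (hW0 : Filter.Tendsto W Filter.atTop (nhds 0))
    (𝒳 : ℕ → Matrix (Fin l₀ ⊕ Fin l₁) (Fin l₀ ⊕ Fin l₁) ℂ)
    (h0 : 𝒳 0 = 1)
    (hrec : ∀ n, 𝒳 (n + 1) = (Matrix.fromBlocks S 0 0 Γ + W n) * 𝒳 n)
    :
    ∀ X : ℕ → Matrix (Fin l₀) (Fin l₀) ℂ,
      (∀ n, X n = (𝒳 n).toBlocks₁₁ -
          (𝒳 n).toBlocks₁₂ * ((𝒳 n).toBlocks₂₂)⁻¹ * (𝒳 n).toBlocks₂₁) →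
      (∃ Y : Matrix (Fin l₁) (Fin l₀) ℂ,
          Filter.Tendsto (fun n => ((𝒳 n).toBlocks₂₂)⁻¹ * (𝒳 n).toBlocks₂₁)
            Filter.atTop (nhds Y)) ∧
        (∀ n, ((𝒳 n).toBlocks₂₂)⁻¹ * (𝒳 n).toBlocks₂₁ =
            ∑ k ∈ Finset.range n,
              ((𝒳 (k + 1)).toBlocks₂₂)⁻¹ * (W k).toBlocks₂₁ * X k) ∧
        Summable (fun k =>
          ‖((𝒳 (k + 1)).toBlocks₂₂)⁻¹ * (W k).toBlocks₂₁ * X k‖) := by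
  intro X hX
  -- block recursions
  have hblocks : ∀ n,
      (𝒳 (n+1)).toBlocks₁₁ = (S + (W n).toBlocks₁₁) * (𝒳 n).toBlocks₁₁
          + (W n).toBlocks₁₂ * (𝒳 n).toBlocks₂₁ ∧
      (𝒳 (n+1)).toBlocks₁₂ = (S + (W n).toBlocks₁₁) * (𝒳 n).toBlocks₁₂
          + (W n).toBlocks₁₂ * (𝒳 n).toBlocks₂₂ ∧
      (𝒳 (n+1)).toBlocks₂₁ = (W n).toBlocks₂₁ * (𝒳 n).toBlocks₁₁
          + (Γ + (W n).toBlocks₂₂) * (𝒳 n).toBlocks₂₁ ∧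
      (𝒳 (n+1)).toBlocks₂₂ = (W n).toBlocks₂₁ * (𝒳 n).toBlocks₁₂
          + (Γ + (W n).toBlocks₂₂) * (𝒳 n).toBlocks₂₂ := by
    intro n
    have hrecn := hrec n
    have hWb : W n = Matrix.fromBlocks (W n).toBlocks₁₁ (W n).toBlocks₁₂
        (W n).toBlocks₂₁ (W n).toBlocks₂₂ := (W n).fromBlocks_toBlocks.symm
    have hMb : 𝒳 n = Matrix.fromBlocks (𝒳 n).toBlocks₁₁ (𝒳 n).toBlocks₁₂
        (𝒳 n).toBlocks₂₁ (𝒳 n).toBlocks₂₂ := (𝒳 n).fromBlocks_toBlocks.symm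
    rw [hWb, hMb] at hrecn
    rw [Matrix.fromBlocks_add, Matrix.fromBlocks_multiply] at hrecn
    rw [hrecn]
    simp [Matrix.toBlocks_fromBlocks₁₁, Matrix.toBlocks_fromBlocks₁₂,
      Matrix.toBlocks_fromBlocks₂₁, Matrix.toBlocks_fromBlocks₂₂,
      Matrix.add_mul, zero_add, add_zero]
  -- base values
  have hD0 : (𝒳 0).toBlocks₂₂ = 1 := by
    rw [h0, ← Matrix.fromBlocks_one]; rfl
  have hC0 : (𝒳 0).toBlocks₂₁ = 0 := by
    rw [h0, ← Matrix.fromBlocks_one]; rfl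
  have hB0 : (𝒳 0).toBlocks₁₂ = 0 := by
    rw [h0, ← Matrix.fromBlocks_one]; rfl
  -- the inductive invariant
  have key : ∀ n, IsUnit ((𝒳 n).toBlocks₂₂) ∧
      ‖(𝒳 n).toBlocks₁₂ * ((𝒳 n).toBlocks₂₂)⁻¹‖ ≤ 1 := by
    intro n
    induction n with
    | zero =>
      refine ⟨by rw [hD0]; exact isUnit_one, ?_⟩
      rw [hB0, Matrix.zero_mul, norm_zero]
      exact zero_le_one
    | succ n ih =>
      obtain ⟨h1, h2, -⟩ := Stmt5Aux.step hγ hS hΓunit hΓ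
        (Stmt5Aux.norm_toBlocks₁₁_le (W n)) (Stmt5Aux.norm_toBlocks₁₂_le (W n))
        (Stmt5Aux.norm_toBlocks₂₁_le (W n)) (Stmt5Aux.norm_toBlocks₂₂_le (W n))
        (hW n) (hblocks n).1 (hblocks n).2.1 (hblocks n).2.2.1 (hblocks n).2.2.2
        ih.1 ih.2
      exact ⟨h1, h2⟩
  -- the per-step estimates
  have extras : ∀ n,
      ‖((𝒳 (n+1)).toBlocks₂₂)⁻¹‖ ≤ Real.exp (-(2 * γ)) /
          (1 - 2 * ‖W n‖ * Real.exp (-(2 * γ))) * ‖((𝒳 n).toBlocks₂₂)⁻¹‖ ∧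
      ‖X (n+1)‖ ≤ (Real.exp γ + 2 * ‖W n‖) * ‖X n‖ ∧
      ((𝒳 (n+1)).toBlocks₂₂)⁻¹ * (𝒳 (n+1)).toBlocks₂₁ =
        ((𝒳 n).toBlocks₂₂)⁻¹ * (𝒳 n).toBlocks₂₁ +
          ((𝒳 (n+1)).toBlocks₂₂)⁻¹ * (W n).toBlocks₂₁ * X n := by
    intro n
    obtain ⟨-, -, h3, h4, h5⟩ := Stmt5Aux.step hγ hS hΓunit hΓ
      (Stmt5Aux.norm_toBlocks₁₁_le (W n)) (Stmt5Aux.norm_toBlocks₁₂_le (W n))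
      (Stmt5Aux.norm_toBlocks₂₁_le (W n)) (Stmt5Aux.norm_toBlocks₂₂_le (W n))
      (hW n) (hblocks n).1 (hblocks n).2.1 (hblocks n).2.2.1 (hblocks n).2.2.2
      (key n).1 (key n).2
    refine ⟨h3, ?_, ?_⟩
    · rw [hX n, hX (n+1)]; exact h4
    · rw [hX n]; exact h5
  -- partial sum identity
  have hsum : ∀ n, ((𝒳 n).toBlocks₂₂)⁻¹ * (𝒳 n).toBlocks₂₁ =
      ∑ k ∈ Finset.range n,
        ((𝒳 (k + 1)).toBlocks₂₂)⁻¹ * (W k).toBlocks₂₁ * X k := by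
    intro n
    induction n with
    | zero => simp [hC0]
    | succ n ih =>
      rw [Finset.sum_range_succ, ← ih, (extras n).2.2]
  -- real-number setup for the tail estimates
  set f : ℕ → Matrix (Fin l₁) (Fin l₀) ℂ :=
    fun k => ((𝒳 (k + 1)).toBlocks₂₂)⁻¹ * (W k).toBlocks₂₁ * X k with hfdef
  set u := Real.exp γ with hu_def
  have hu1 : 1 < u := by
    rw [hu_def, ← Real.exp_zero]; exact Real.exp_lt_exp.mpr hγ
  have hu0 : 0 < u := by linarith
  have h2γ : Real.exp (2 * γ) = u ^ 2 := by rw [two_mul, Real.exp_add]; ring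
  set t := Real.exp (-(2 * γ)) with ht_def
  have ht : t = (u ^ 2)⁻¹ := by rw [ht_def, Real.exp_neg, h2γ]
  have ht0 : 0 < t := Real.exp_pos _
  have htu : t * u ^ 2 = 1 := by rw [ht]; field_simp
  have hut1 : u * t < 1 := by nlinarith
  have hut0 : 0 < u * t := mul_pos hu0 ht0
  set ε' : ℝ := (Real.exp (2 * γ) - Real.exp γ) / 8 with hε'def
  have hε'eq : 8 * ε' = u ^ 2 - u := by rw [hε'def, h2γ]; ring
  have hε'0 : 0 < ε' := by nlinarith
  have hkey2 : u * t + 8 * ε' * t = 1 := by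
    have : (8 * ε') * t = u ^ 2 * t - u * t := by rw [hε'eq]; ring
    nlinarith
  have hden' : 0 < 1 - 2 * ε' * t := by nlinarith [mul_pos hε'0 ht0]
  set δ : ℝ := t / (1 - 2 * ε' * t) with hδdef
  have hδ0 : 0 ≤ δ := le_of_lt (div_pos ht0 hden')
  set ρ : ℝ := u + 2 * ε' with hρdef
  have hρ0 : 0 ≤ ρ := by positivity
  have hθ1 : δ * ρ < 1 := by
    rw [hδdef, div_mul_eq_mul_div, div_lt_one hden']
    have h4 : 0 < 4 * ε' * t := by positivity
    nlinarith
  have hθ0 : 0 ≤ δ * ρ := mul_nonneg hδ0 hρ0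
  -- eventually `‖W n‖ ≤ ε'`
  obtain ⟨N, hN⟩ : ∃ N : ℕ, ∀ n, N ≤ n → ‖W n‖ ≤ ε' := by
    have h1 := NormedAddCommGroup.tendsto_nhds_zero.mp hW0 ε' hε'0
    obtain ⟨N, hN⟩ := Filter.eventually_atTop.mp h1
    exact ⟨N, fun n hn => le_of_lt (hN n hn)⟩
  -- geometric bounds after time N
  have hgeo : ∀ j : ℕ, ‖((𝒳 (N + j)).toBlocks₂₂)⁻¹‖ ≤ ‖((𝒳 N).toBlocks₂₂)⁻¹‖ * δ ^ j ∧
      ‖X (N + j)‖ ≤ ‖X N‖ * ρ ^ j := by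
    intro j
    induction j with
    | zero => simp
    | succ j ih =>
      have hWn : ‖W (N + j)‖ ≤ ε' := hN _ (Nat.le_add_right N j)
      have hWn0 : 0 ≤ ‖W (N + j)‖ := norm_nonneg _
      have hdenW : 0 < 1 - 2 * ‖W (N + j)‖ * t := by nlinarith [mul_nonneg hWn0 ht0.le]
      have h1 := (extras (N + j)).1
      have h2 := (extras (N + j)).2.1
      have hmono : t / (1 - 2 * ‖W (N + j)‖ * t) ≤ δ := by
        rw [hδdef, div_le_div_iff₀ hdenW hden']
        nlinarith [mul_nonneg (mul_nonneg (by linarith : (0:ℝ) ≤ 2) hWn0) ht0.le]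
      have hNj : N + (j + 1) = (N + j) + 1 := rfl
      constructor
      · rw [hNj]
        calc ‖((𝒳 ((N + j) + 1)).toBlocks₂₂)⁻¹‖
            ≤ t / (1 - 2 * ‖W (N + j)‖ * t) * ‖((𝒳 (N + j)).toBlocks₂₂)⁻¹‖ := h1
          _ ≤ δ * (‖((𝒳 N).toBlocks₂₂)⁻¹‖ * δ ^ j) :=
              mul_le_mul hmono ih.1 (norm_nonneg _) hδ0
          _ = ‖((𝒳 N).toBlocks₂₂)⁻¹‖ * δ ^ (j + 1) := by ring
      · rw [hNj]
        have hρmono : u + 2 * ‖W (N + j)‖ ≤ ρ := by rw [hρdef]; linarith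
        calc ‖X ((N + j) + 1)‖ ≤ (u + 2 * ‖W (N + j)‖) * ‖X (N + j)‖ := h2
          _ ≤ ρ * (‖X N‖ * ρ ^ j) := mul_le_mul hρmono ih.2 (norm_nonneg _) hρ0
          _ = ‖X N‖ * ρ ^ (j + 1) := by ring
  -- term bound
  set M₀ : ℝ := ‖((𝒳 N).toBlocks₂₂)⁻¹‖ * ‖X N‖ * ((Real.exp (2 * γ) - Real.exp γ) / 4) * δ
    with hM₀def
  have hterm : ∀ j : ℕ, ‖f (N + j)‖ ≤ M₀ * (δ * ρ) ^ j := by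
    intro j
    have hNj : N + (j + 1) = (N + j) + 1 := rfl
    have hD1 := (hgeo (j + 1)).1
    rw [hNj] at hD1
    have hX1 := (hgeo j).2
    have hc1 : ‖(W (N + j)).toBlocks₂₁‖ ≤ (Real.exp (2 * γ) - Real.exp γ) / 4 :=
      (Stmt5Aux.norm_toBlocks₂₁_le (W (N + j))).trans (hW (N + j))
    have h0 : ‖f (N + j)‖ ≤ ‖((𝒳 ((N + j) + 1)).toBlocks₂₂)⁻¹‖ *
        ‖(W (N + j)).toBlocks₂₁‖ * ‖X (N + j)‖ := Stmt5Aux.norm_mul₃_le' _ _ _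
    have hε4 : (0:ℝ) ≤ (Real.exp (2 * γ) - Real.exp γ) / 4 := by
      rw [h2γ]; nlinarith
    have hprod : ‖((𝒳 ((N + j) + 1)).toBlocks₂₂)⁻¹‖ * ‖(W (N + j)).toBlocks₂₁‖ *
        ‖X (N + j)‖ ≤ (‖((𝒳 N).toBlocks₂₂)⁻¹‖ * δ ^ (j + 1)) *
          ((Real.exp (2 * γ) - Real.exp γ) / 4) * (‖X N‖ * ρ ^ j) := by
      have hm1 : ‖((𝒳 ((N + j) + 1)).toBlocks₂₂)⁻¹‖ * ‖(W (N + j)).toBlocks₂₁‖ ≤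
          (‖((𝒳 N).toBlocks₂₂)⁻¹‖ * δ ^ (j + 1)) * ((Real.exp (2 * γ) - Real.exp γ) / 4) :=
        mul_le_mul hD1 hc1 (norm_nonneg _) (le_trans (norm_nonneg _) hD1)
      exact mul_le_mul hm1 hX1 (norm_nonneg _)
        (mul_nonneg (le_trans (norm_nonneg _) hD1) hε4)
    have heq : (‖((𝒳 N).toBlocks₂₂)⁻¹‖ * δ ^ (j + 1)) *
        ((Real.exp (2 * γ) - Real.exp γ) / 4) * (‖X N‖ * ρ ^ j) = M₀ * (δ * ρ) ^ j := by
      rw [hM₀def, mul_pow]; ring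
    linarith
  -- summability of the norms
  have hsummable : Summable (fun k => ‖f k‖) := by
    rw [← summable_nat_add_iff N]
    refine Summable.of_nonneg_of_le (fun j => norm_nonneg _) (fun j => ?_)
      ((summable_geometric_of_lt_one hθ0 hθ1).mul_left M₀)
    have := hterm j
    rwa [Nat.add_comm N j] at this
  have hsf : Summable f := hsummable.of_norm
  refine ⟨⟨∑' k, f k, ?_⟩, hsum, hsummable⟩
  exact (hsf.hasSum.tendsto_sum_nat).congr (fun n => (hsum n).symm)
end

section
/- In the block recursion, the Schur complement satisfies the update formula X_{n+1} = (S + aₙ)Xₙ − Z_{n+1} cₙ Xₙ, where Z_{n+1} = ((S+aₙ)Zₙ + bₙ)(cₙZₙ + Γ + dₙ)⁻¹, provided Dₙ and D_{n+1} are invertible. -/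
/-- One-step update formulas for the Schur complement `Xₙ = Aₙ - Bₙ Dₙ⁻¹ Cₙ`
and `Zₙ = Bₙ Dₙ⁻¹` in the block recursion `𝒳_{n+1} = (T + Wₙ) 𝒳ₙ`, provided
`Dₙ` and `D_{n+1}` are invertible. -/
theorem stmt6 (l₀ l₁ : ℕ)
    (S : Matrix (Fin l₀) (Fin l₀) ℂ) (Γ : Matrix (Fin l₁) (Fin l₁) ℂ)
    (W : ℕ → Matrix (Fin l₀ ⊕ Fin l₁) (Fin l₀ ⊕ Fin l₁) ℂ)
    (𝒳 : ℕ → Matrix (Fin l₀ ⊕ Fin l₁) (Fin l₀ ⊕ Fin l₁) ℂ)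
    (h0 : 𝒳 0 = 1)
    (hrec : ∀ k, 𝒳 (k + 1) = (Matrix.fromBlocks S 0 0 Γ + W k) * 𝒳 k)
    (n : ℕ)
    (hDn : IsUnit ((𝒳 n).toBlocks₂₂))
    (hDn1 : IsUnit ((𝒳 (n + 1)).toBlocks₂₂)) :
    -- Z_{n+1} = ((S+aₙ)Zₙ + bₙ)(cₙZₙ + Γ + dₙ)⁻¹
    (𝒳 (n + 1)).toBlocks₁₂ * ((𝒳 (n + 1)).toBlocks₂₂)⁻¹ =
        ((S + (W n).toBlocks₁₁) * ((𝒳 n).toBlocks₁₂ * ((𝒳 n).toBlocks₂₂)⁻¹)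
            + (W n).toBlocks₁₂) *
          ((W n).toBlocks₂₁ * ((𝒳 n).toBlocks₁₂ * ((𝒳 n).toBlocks₂₂)⁻¹)
            + Γ + (W n).toBlocks₂₂)⁻¹ ∧
    -- X_{n+1} = (S+aₙ)Xₙ - Z_{n+1} cₙ Xₙ
    ((𝒳 (n + 1)).toBlocks₁₁ -
        (𝒳 (n + 1)).toBlocks₁₂ * ((𝒳 (n + 1)).toBlocks₂₂)⁻¹ * (𝒳 (n + 1)).toBlocks₂₁) =
      (S + (W n).toBlocks₁₁) *
          ((𝒳 n).toBlocks₁₁ - (𝒳 n).toBlocks₁₂ * ((𝒳 n).toBlocks₂₂)⁻¹ * (𝒳 n).toBlocks₂₁)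
        - ((𝒳 (n + 1)).toBlocks₁₂ * ((𝒳 (n + 1)).toBlocks₂₂)⁻¹) * (W n).toBlocks₂₁ *
          ((𝒳 n).toBlocks₁₁ - (𝒳 n).toBlocks₁₂ * ((𝒳 n).toBlocks₂₂)⁻¹ * (𝒳 n).toBlocks₂₁) := by
  set a := (W n).toBlocks₁₁ with ha
  set b := (W n).toBlocks₁₂ with hb
  set c := (W n).toBlocks₂₁ with hc
  set d := (W n).toBlocks₂₂ with hd
  set A := (𝒳 n).toBlocks₁₁ with hA
  set B := (𝒳 n).toBlocks₁₂ with hB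
  set C := (𝒳 n).toBlocks₂₁ with hC
  set D := (𝒳 n).toBlocks₂₂ with hD
  set A' := (𝒳 (n + 1)).toBlocks₁₁ with hA'd
  set B' := (𝒳 (n + 1)).toBlocks₁₂ with hB'd
  set C' := (𝒳 (n + 1)).toBlocks₂₁ with hC'd
  set D' := (𝒳 (n + 1)).toBlocks₂₂ with hD'd
  have hW : W n = Matrix.fromBlocks a b c d := by
    rw [ha, hb, hc, hd, Matrix.fromBlocks_toBlocks]
  have hXn : 𝒳 n = Matrix.fromBlocks A B C D := by
    rw [hA, hB, hC, hD, Matrix.fromBlocks_toBlocks]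
  have hX : 𝒳 (n + 1) = Matrix.fromBlocks
      ((S + a) * A + b * C) ((S + a) * B + b * D)
      (c * A + (Γ + d) * C) (c * B + (Γ + d) * D) := by
    rw [hrec, hW, hXn, Matrix.fromBlocks_add]
    rw [zero_add, zero_add, Matrix.fromBlocks_multiply]
  clear_value a b c d A B C D A' B' C' D'
  have hA' : A' = (S + a) * A + b * C := by rw [hA'd, hX]; rfl
  have hB' : B' = (S + a) * B + b * D := by rw [hB'd, hX]; rfl
  have hC' : C' = c * A + (Γ + d) * C := by rw [hC'd, hX]; rfl
  have hD' : D' = c * B + (Γ + d) * D := by rw [hD'd, hX]; rfl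
  set Z := B * D⁻¹ with hZ
  clear_value Z
  have hdet : IsUnit D.det := (Matrix.isUnit_iff_isUnit_det D).mp hDn
  have hdet' : IsUnit D'.det := (Matrix.isUnit_iff_isUnit_det D').mp hDn1
  -- key: (c Z + Γ + d) * D = D'
  have hkey : (c * Z + Γ + d) * D = D' := by
    rw [hD', hZ]
    calc (c * (B * D⁻¹) + Γ + d) * D
        = c * (B * D⁻¹ * D) + (Γ + d) * D := by
          simp only [Matrix.add_mul, Matrix.mul_assoc]; abel
      _ = c * B + (Γ + d) * D := by rw [Matrix.nonsing_inv_mul_cancel_right D B hdet]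
  have hM : c * Z + Γ + d = D' * D⁻¹ := by
    rw [← hkey, Matrix.mul_nonsing_inv_cancel_right D _ hdet]
  have hMdet : IsUnit (c * Z + Γ + d).det := by
    have h2 : (c * Z + Γ + d).det * D.det = D'.det := by
      rw [← Matrix.det_mul, hkey]
    exact isUnit_of_mul_isUnit_left (h2 ▸ hdet')
  have hMinv : (c * Z + Γ + d)⁻¹ = D * D'⁻¹ := by
    rw [hM, Matrix.mul_inv_rev, Matrix.nonsing_inv_nonsing_inv D hdet]
  -- first claim
  have hZ1 : B' * D'⁻¹ = ((S + a) * Z + b) * (c * Z + Γ + d)⁻¹ := by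
    rw [hMinv, hB', hZ]
    calc ((S + a) * B + b * D) * D'⁻¹
        = ((S + a) * (B * D⁻¹ * D) + b * D) * D'⁻¹ := by
          rw [Matrix.nonsing_inv_mul_cancel_right D B hdet]
      _ = ((S + a) * (B * D⁻¹) + b) * (D * D'⁻¹) := by
          simp only [Matrix.add_mul, Matrix.mul_assoc]
  refine ⟨hZ1, ?_⟩
  set Z' := B' * D'⁻¹ with hZ'def
  clear_value Z'
  have hZ'M : Z' * (c * Z + Γ + d) = (S + a) * Z + b := by
    rw [hZ1, Matrix.nonsing_inv_mul_cancel_right _ _ hMdet]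
  rw [hA', hC', ← sub_eq_zero]
  have hfin : (S + a) * A + b * C - Z' * (c * A + (Γ + d) * C) -
      ((S + a) * (A - Z * C) - Z' * c * (A - Z * C)) =
      ((S + a) * Z + b - Z' * (c * Z + Γ + d)) * C := by
    simp only [Matrix.add_mul, Matrix.sub_mul, Matrix.mul_add, Matrix.mul_sub,
      Matrix.mul_assoc]
    abel
  rw [hfin, hZ'M, sub_self, Matrix.zero_mul]
end

section
/- In the block recursion with the additional hypothesis Wₙ → 0, one has Zₙ → 0 exponentially in the following sense: for every k ∈ ℕ there exists N_k such that ‖Zₙ‖ ≤ e^{-kγ/2} for all n > N_k. -/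
open scoped Matrix.Norms.L2Operator
open Matrix

set_option linter.unusedSectionVars false
set_option maxHeartbeats 1000000

section Aux

variable {m n : Type*} [Fintype m] [Fintype n] [DecidableEq m] [DecidableEq n]

private lemma eucl_restrict_inl_le (z : EuclideanSpace ℂ (m ⊕ n)) :
    ‖(EuclideanSpace.equiv m ℂ).symm (fun i => z (Sum.inl i))‖ ≤ ‖z‖ := by
  rw [EuclideanSpace.norm_eq, EuclideanSpace.norm_eq]
  apply Real.sqrt_le_sqrt
  rw [Fintype.sum_sum_type]
  have : ∀ i : m, ‖((EuclideanSpace.equiv m ℂ).symm (fun i => z (Sum.inl i))) i‖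
      = ‖z (Sum.inl i)‖ := fun i => rfl
  simp only [this]
  exact le_add_of_nonneg_right (by positivity)

private lemma eucl_restrict_inr_le (z : EuclideanSpace ℂ (m ⊕ n)) :
    ‖(EuclideanSpace.equiv n ℂ).symm (fun j => z (Sum.inr j))‖ ≤ ‖z‖ := by
  rw [EuclideanSpace.norm_eq, EuclideanSpace.norm_eq]
  apply Real.sqrt_le_sqrt
  rw [Fintype.sum_sum_type]
  have : ∀ j : n, ‖((EuclideanSpace.equiv n ℂ).symm (fun j => z (Sum.inr j))) j‖
      = ‖z (Sum.inr j)‖ := fun j => rfl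
  simp only [this]
  exact le_add_of_nonneg_left (by positivity)

private lemma eucl_ext_inl (y : EuclideanSpace ℂ m) :
    ‖(EuclideanSpace.equiv (m ⊕ n) ℂ).symm (Sum.elim (fun i => y i) 0)‖ = ‖y‖ := by
  rw [EuclideanSpace.norm_eq, EuclideanSpace.norm_eq]
  congr 1
  rw [Fintype.sum_sum_type]
  have h1 : ∀ i : m, ‖((EuclideanSpace.equiv (m ⊕ n) ℂ).symm (Sum.elim (fun i => y i) 0))
      (Sum.inl i)‖ = ‖y i‖ := fun i => rfl
  have h2 : ∀ j : n, ‖((EuclideanSpace.equiv (m ⊕ n) ℂ).symm (Sum.elim (fun i => y i) 0))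
      (Sum.inr j)‖ = 0 := fun j => norm_zero
  simp [h1, h2]

private lemma eucl_ext_inr (y : EuclideanSpace ℂ n) :
    ‖(EuclideanSpace.equiv (m ⊕ n) ℂ).symm (Sum.elim 0 (fun j => y j))‖ = ‖y‖ := by
  rw [EuclideanSpace.norm_eq, EuclideanSpace.norm_eq]
  congr 1
  rw [Fintype.sum_sum_type]
  have h1 : ∀ i : m, ‖((EuclideanSpace.equiv (m ⊕ n) ℂ).symm (Sum.elim 0 (fun j => y j)))
      (Sum.inl i)‖ = 0 := fun i => norm_zero
  have h2 : ∀ j : n, ‖((EuclideanSpace.equiv (m ⊕ n) ℂ).symm (Sum.elim 0 (fun j => y j)))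
      (Sum.inr j)‖ = ‖y j‖ := fun j => rfl
  simp [h1, h2]

private lemma l2norm_le_of_mulVec {α β : Type*} [Fintype α] [Fintype β] [DecidableEq β]
    (A : Matrix α β ℂ) {c : ℝ} (hc : 0 ≤ c)
    (h : ∀ x : EuclideanSpace ℂ β, ‖(EuclideanSpace.equiv α ℂ).symm (A *ᵥ x)‖ ≤ c * ‖x‖) :
    ‖A‖ ≤ c := by
  rw [Matrix.l2_opNorm_def]
  exact ContinuousLinearMap.opNorm_le_bound _ hc h

private lemma norm_toBlocks₁₁_le (M : Matrix (m ⊕ n) (m ⊕ n) ℂ) : ‖M.toBlocks₁₁‖ ≤ ‖M‖ := by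
  apply l2norm_le_of_mulVec _ (norm_nonneg M)
  intro y
  have key : (EuclideanSpace.equiv m ℂ).symm (M.toBlocks₁₁ *ᵥ y) =
      (EuclideanSpace.equiv m ℂ).symm
        (fun i => ((EuclideanSpace.equiv (m ⊕ n) ℂ).symm
          (M *ᵥ (EuclideanSpace.equiv (m ⊕ n) ℂ).symm (Sum.elim (fun i => y i) 0))) (Sum.inl i)) := by
    congr 1
    funext i
    simp [Matrix.toBlocks₁₁, Matrix.mulVec, dotProduct, Fintype.sum_sum_type]
  rw [key]
  calc _ ≤ ‖(EuclideanSpace.equiv (m ⊕ n) ℂ).symm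
        (M *ᵥ (EuclideanSpace.equiv (m ⊕ n) ℂ).symm (Sum.elim (fun i => y i) 0))‖ :=
        eucl_restrict_inl_le _
    _ ≤ ‖M‖ * ‖(EuclideanSpace.equiv (m ⊕ n) ℂ).symm (Sum.elim (fun i => y i) 0)‖ :=
        Matrix.l2_opNorm_mulVec M _
    _ = ‖M‖ * ‖y‖ := by rw [eucl_ext_inl]

private lemma norm_toBlocks₁₂_le (M : Matrix (m ⊕ n) (m ⊕ n) ℂ) : ‖M.toBlocks₁₂‖ ≤ ‖M‖ := by
  apply l2norm_le_of_mulVec _ (norm_nonneg M)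
  intro y
  have key : (EuclideanSpace.equiv m ℂ).symm (M.toBlocks₁₂ *ᵥ y) =
      (EuclideanSpace.equiv m ℂ).symm
        (fun i => ((EuclideanSpace.equiv (m ⊕ n) ℂ).symm
          (M *ᵥ (EuclideanSpace.equiv (m ⊕ n) ℂ).symm (Sum.elim 0 (fun j => y j)))) (Sum.inl i)) := by
    congr 1
    funext i
    simp [Matrix.toBlocks₁₂, Matrix.mulVec, dotProduct, Fintype.sum_sum_type]
  rw [key]
  calc _ ≤ ‖(EuclideanSpace.equiv (m ⊕ n) ℂ).symm
        (M *ᵥ (EuclideanSpace.equiv (m ⊕ n) ℂ).symm (Sum.elim 0 (fun j => y j)))‖ :=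
        eucl_restrict_inl_le _
    _ ≤ ‖M‖ * ‖(EuclideanSpace.equiv (m ⊕ n) ℂ).symm (Sum.elim 0 (fun j => y j))‖ :=
        Matrix.l2_opNorm_mulVec M _
    _ = ‖M‖ * ‖y‖ := by rw [eucl_ext_inr]

private lemma norm_toBlocks₂₁_le (M : Matrix (m ⊕ n) (m ⊕ n) ℂ) : ‖M.toBlocks₂₁‖ ≤ ‖M‖ := by
  apply l2norm_le_of_mulVec _ (norm_nonneg M)
  intro y
  have key : (EuclideanSpace.equiv n ℂ).symm (M.toBlocks₂₁ *ᵥ y) =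
      (EuclideanSpace.equiv n ℂ).symm
        (fun j => ((EuclideanSpace.equiv (m ⊕ n) ℂ).symm
          (M *ᵥ (EuclideanSpace.equiv (m ⊕ n) ℂ).symm (Sum.elim (fun i => y i) 0))) (Sum.inr j)) := by
    congr 1
    funext j
    simp [Matrix.toBlocks₂₁, Matrix.mulVec, dotProduct, Fintype.sum_sum_type]
  rw [key]
  calc _ ≤ ‖(EuclideanSpace.equiv (m ⊕ n) ℂ).symm
        (M *ᵥ (EuclideanSpace.equiv (m ⊕ n) ℂ).symm (Sum.elim (fun i => y i) 0))‖ :=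
        eucl_restrict_inr_le _
    _ ≤ ‖M‖ * ‖(EuclideanSpace.equiv (m ⊕ n) ℂ).symm (Sum.elim (fun i => y i) 0)‖ :=
        Matrix.l2_opNorm_mulVec M _
    _ = ‖M‖ * ‖y‖ := by rw [eucl_ext_inl]

private lemma norm_toBlocks₂₂_le (M : Matrix (m ⊕ n) (m ⊕ n) ℂ) : ‖M.toBlocks₂₂‖ ≤ ‖M‖ := by
  apply l2norm_le_of_mulVec _ (norm_nonneg M)
  intro y
  have key : (EuclideanSpace.equiv n ℂ).symm (M.toBlocks₂₂ *ᵥ y) =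
      (EuclideanSpace.equiv n ℂ).symm
        (fun j => ((EuclideanSpace.equiv (m ⊕ n) ℂ).symm
          (M *ᵥ (EuclideanSpace.equiv (m ⊕ n) ℂ).symm (Sum.elim 0 (fun j => y j)))) (Sum.inr j)) := by
    congr 1
    funext j
    simp [Matrix.toBlocks₂₂, Matrix.mulVec, dotProduct, Fintype.sum_sum_type]
  rw [key]
  calc _ ≤ ‖(EuclideanSpace.equiv (m ⊕ n) ℂ).symm
        (M *ᵥ (EuclideanSpace.equiv (m ⊕ n) ℂ).symm (Sum.elim 0 (fun j => y j)))‖ :=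
        eucl_restrict_inr_le _
    _ ≤ ‖M‖ * ‖(EuclideanSpace.equiv (m ⊕ n) ℂ).symm (Sum.elim 0 (fun j => y j))‖ :=
        Matrix.l2_opNorm_mulVec M _
    _ = ‖M‖ * ‖y‖ := by rw [eucl_ext_inr]

private lemma norm_ring_inverse_one_sub_le
    {x : Matrix n n ℂ} (h : ‖x‖ < 1) : ‖Ring.inverse (1 - x)‖ ≤ (1 - ‖x‖)⁻¹ := by
  rw [← geom_series_eq_inverse x h]
  refine (tsum_geometric_le_of_norm_lt_one x h).trans ?_
  have h1 : ‖(1 : Matrix n n ℂ)‖ ≤ 1 := by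
    rw [Matrix.cstar_norm_def, _root_.map_one]; exact ContinuousLinearMap.norm_id_le
  linarith

private lemma inv_perturb
    {Γ E : Matrix n n ℂ} {g w : ℝ} (hg : 0 < g) (hΓu : IsUnit Γ)
    (hΓ : ‖Γ⁻¹‖ ≤ g⁻¹) (hE : ‖E‖ ≤ w) (hw : w < g) :
    IsUnit (Γ + E) ∧ ‖(Γ + E)⁻¹‖ ≤ (g - w)⁻¹ := by
  have hw0 : 0 ≤ w := le_trans (norm_nonneg E) hE
  set x : Matrix n n ℂ := -(Γ⁻¹ * E) with hx
  have hxn : ‖x‖ ≤ g⁻¹ * w := by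
    rw [hx, norm_neg]
    exact (norm_mul_le _ _).trans (mul_le_mul hΓ hE (norm_nonneg E) (by positivity))
  have hx1 : ‖x‖ < 1 := lt_of_le_of_lt hxn (by
    rw [inv_mul_lt_iff₀ hg, mul_one]; exact hw)
  have hΓdet : IsUnit Γ.det := (Matrix.isUnit_iff_isUnit_det Γ).mp hΓu
  have hfact : Γ + E = Γ * (1 - x) := by
    rw [hx, mul_sub, mul_one, mul_neg, ← Matrix.mul_assoc, Matrix.mul_nonsing_inv Γ hΓdet,
      Matrix.one_mul, sub_neg_eq_add]
  have hux : IsUnit (1 - x) := isUnit_one_sub_of_norm_lt_one hx1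
  have hu : IsUnit (Γ + E) := by rw [hfact]; exact hΓu.mul hux
  refine ⟨hu, ?_⟩
  have hinv : (Γ + E)⁻¹ = (1 - x)⁻¹ * Γ⁻¹ := by rw [hfact, Matrix.mul_inv_rev]
  have h1x : ‖(1 - x)⁻¹‖ ≤ (1 - ‖x‖)⁻¹ := by
    rw [Matrix.nonsing_inv_eq_ringInverse]
    exact norm_ring_inverse_one_sub_le hx1
  rw [hinv]
  calc ‖(1 - x)⁻¹ * Γ⁻¹‖ ≤ ‖(1 - x)⁻¹‖ * ‖Γ⁻¹‖ := norm_mul_le _ _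
    _ ≤ (1 - ‖x‖)⁻¹ * g⁻¹ := by
        exact mul_le_mul h1x hΓ (norm_nonneg _) (inv_nonneg.mpr (by linarith))
    _ ≤ (1 - g⁻¹ * w)⁻¹ * g⁻¹ := by
        have h2 : 0 < 1 - g⁻¹ * w := by
          rw [sub_pos, inv_mul_lt_iff₀ hg, mul_one]; exact hw
        have h3 : (1 - ‖x‖)⁻¹ ≤ (1 - g⁻¹ * w)⁻¹ := by
          apply inv_anti₀ h2; linarith [hxn]
        exact mul_le_mul_of_nonneg_right h3 (by positivity)
    _ = (g - w)⁻¹ := by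
        rw [← mul_inv]
        congr 1
        field_simp

end Aux

/-- If `Wₙ → 0`, then `Zₙ → 0` exponentially: for every `k` there is `N_k`
with `‖Zₙ‖ ≤ e^{-kγ/2}` for all `n > N_k`. -/
theorem stmt8 (l₀ l₁ : ℕ) (γ : ℝ) (hγ : 0 < γ)
    (S : Matrix (Fin l₀) (Fin l₀) ℂ) (Γ : Matrix (Fin l₁) (Fin l₁) ℂ)
    (hS : ‖S‖ ≤ Real.exp γ)
    (hΓunit : IsUnit Γ) (hΓ : ‖Γ⁻¹‖ ≤ Real.exp (-(2 * γ)))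
    (W : ℕ → Matrix (Fin l₀ ⊕ Fin l₁) (Fin l₀ ⊕ Fin l₁) ℂ)
    (hW : ∀ n, ‖W n‖ ≤ (Real.exp (2 * γ) - Real.exp γ) / 4)
    (hW0 : Filter.Tendsto W Filter.atTop (nhds 0))
    (𝒳 : ℕ → Matrix (Fin l₀ ⊕ Fin l₁) (Fin l₀ ⊕ Fin l₁) ℂ)
    (h0 : 𝒳 0 = 1)
    (hrec : ∀ n, 𝒳 (n + 1) = (Matrix.fromBlocks S 0 0 Γ + W n) * 𝒳 n) :
    ∀ k : ℕ, ∃ N : ℕ, ∀ n > N,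
      ‖(𝒳 n).toBlocks₁₂ * ((𝒳 n).toBlocks₂₂)⁻¹‖ ≤ Real.exp (-(k * γ) / 2) := by
  classical
  set eγ := Real.exp γ with heγdef
  set e2γ := Real.exp (2 * γ) with he2γdef
  have heγ0 : 0 < eγ := Real.exp_pos _
  have he2γ0 : 0 < e2γ := Real.exp_pos _
  have h1γ : 1 < eγ := by
    rw [heγdef, show (1:ℝ) = Real.exp 0 by simp]
    exact Real.exp_lt_exp.mpr hγ
  have hee : eγ < e2γ := Real.exp_lt_exp.mpr (by linarith)
  set ε := (e2γ - eγ) / 4 with hεdef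
  have hε0 : 0 < ε := by rw [hεdef]; linarith
  set B : ℕ → Matrix (Fin l₀) (Fin l₁) ℂ := fun n => (𝒳 n).toBlocks₁₂ with hBdef
  set D : ℕ → Matrix (Fin l₁) (Fin l₁) ℂ := fun n => (𝒳 n).toBlocks₂₂ with hDdef
  set Z : ℕ → Matrix (Fin l₀) (Fin l₁) ℂ := fun n => B n * (D n)⁻¹ with hZdef
  -- block recursion
  have hBD : ∀ n, B (n + 1) = (S + (W n).toBlocks₁₁) * B n + (W n).toBlocks₁₂ * D n ∧
      D (n + 1) = (W n).toBlocks₂₁ * B n + (Γ + (W n).toBlocks₂₂) * D n := by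
    intro n
    have h := hrec n
    rw [← Matrix.fromBlocks_toBlocks (W n), ← Matrix.fromBlocks_toBlocks (𝒳 n),
      Matrix.fromBlocks_add, Matrix.fromBlocks_multiply] at h
    constructor
    · have := congrArg Matrix.toBlocks₁₂ h
      rw [Matrix.toBlocks_fromBlocks₁₂] at this
      rw [show B (n+1) = (𝒳 (n+1)).toBlocks₁₂ from rfl, this]
      simp [Matrix.zero_mul, Matrix.add_mul]; rfl
    · have := congrArg Matrix.toBlocks₂₂ h
      rw [Matrix.toBlocks_fromBlocks₂₂] at this
      rw [show D (n+1) = (𝒳 (n+1)).toBlocks₂₂ from rfl, this]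
      simp [Matrix.zero_mul, Matrix.add_mul]; rfl
  -- step lemma
  have key : ∀ n w, IsUnit (D n) → ‖Z n‖ ≤ 1 → ‖W n‖ ≤ w → w ≤ ε →
      IsUnit (D (n + 1)) ∧ ‖Z (n + 1)‖ ≤ ((eγ + w) * ‖Z n‖ + w) * (e2γ - 2 * w)⁻¹ := by
    intro n w hu hz hWn hwε
    have hw0 : 0 ≤ w := le_trans (norm_nonneg _) hWn
    have hdet : IsUnit (D n).det := (Matrix.isUnit_iff_isUnit_det _).mp hu
    have ha : ‖(W n).toBlocks₁₁‖ ≤ w := (norm_toBlocks₁₁_le _).trans hWn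
    have hb : ‖(W n).toBlocks₁₂‖ ≤ w := (norm_toBlocks₁₂_le _).trans hWn
    have hc : ‖(W n).toBlocks₂₁‖ ≤ w := (norm_toBlocks₂₁_le _).trans hWn
    have hd : ‖(W n).toBlocks₂₂‖ ≤ w := (norm_toBlocks₂₂_le _).trans hWn
    set E := (W n).toBlocks₂₁ * Z n + (W n).toBlocks₂₂ with hEdef
    have hZn0 : (0:ℝ) ≤ ‖Z n‖ := norm_nonneg _
    have hE : ‖E‖ ≤ 2 * w := by
      calc ‖E‖ ≤ ‖(W n).toBlocks₂₁ * Z n‖ + ‖(W n).toBlocks₂₂‖ := norm_add_le _ _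
        _ ≤ ‖(W n).toBlocks₂₁‖ * ‖Z n‖ + w := by
            gcongr
            exact Matrix.l2_opNorm_mul _ _
        _ ≤ w * 1 + w := by gcongr
        _ = 2 * w := by ring
    have h2w : 2 * w < e2γ := by
      have : 2 * ε < e2γ := by rw [hεdef]; linarith
      linarith
    have hΓ' : ‖Γ⁻¹‖ ≤ e2γ⁻¹ := by rwa [he2γdef, ← Real.exp_neg]
    obtain ⟨hMu, hMinv⟩ := inv_perturb he2γ0 hΓunit hΓ' hE h2w
    have hZD : Z n * D n = B n := by
      rw [hZdef]
      show B n * (D n)⁻¹ * D n = B n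
      rw [Matrix.mul_assoc, Matrix.nonsing_inv_mul _ hdet, Matrix.mul_one]
    have hDs : D (n + 1) = (Γ + E) * D n := by
      rw [(hBD n).2, hEdef, Matrix.add_mul, Matrix.add_mul, Matrix.add_mul,
        Matrix.mul_assoc, hZD]
      abel
    have hDu : IsUnit (D (n + 1)) := by rw [hDs]; exact hMu.mul hu
    refine ⟨hDu, ?_⟩
    have hZs : Z (n + 1) = ((S + (W n).toBlocks₁₁) * Z n + (W n).toBlocks₁₂) * (Γ + E)⁻¹ := by
      show B (n + 1) * (D (n + 1))⁻¹ = _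
      rw [(hBD n).1, hDs, Matrix.mul_inv_rev]
      have hBs : (S + (W n).toBlocks₁₁) * B n + (W n).toBlocks₁₂ * D n
          = ((S + (W n).toBlocks₁₁) * Z n + (W n).toBlocks₁₂) * D n := by
        conv_rhs => rw [Matrix.add_mul, Matrix.mul_assoc, hZD]
      rw [hBs, Matrix.mul_assoc, ← Matrix.mul_assoc (D n), Matrix.mul_nonsing_inv _ hdet,
        Matrix.one_mul]
    rw [hZs]
    have hnum : ‖(S + (W n).toBlocks₁₁) * Z n + (W n).toBlocks₁₂‖ ≤ (eγ + w) * ‖Z n‖ + w := by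
      calc _ ≤ ‖(S + (W n).toBlocks₁₁) * Z n‖ + ‖(W n).toBlocks₁₂‖ := norm_add_le _ _
        _ ≤ ‖S + (W n).toBlocks₁₁‖ * ‖Z n‖ + w := by
            gcongr
            exact Matrix.l2_opNorm_mul _ _
        _ ≤ (eγ + w) * ‖Z n‖ + w := by
            gcongr
            calc ‖S + (W n).toBlocks₁₁‖ ≤ ‖S‖ + ‖(W n).toBlocks₁₁‖ := norm_add_le _ _
              _ ≤ eγ + w := by gcongr
    have hden : ‖(Γ + E)⁻¹‖ ≤ (e2γ - 2 * w)⁻¹ := hMinv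
    calc ‖((S + (W n).toBlocks₁₁) * Z n + (W n).toBlocks₁₂) * (Γ + E)⁻¹‖
        ≤ ‖(S + (W n).toBlocks₁₁) * Z n + (W n).toBlocks₁₂‖ * ‖(Γ + E)⁻¹‖ :=
          Matrix.l2_opNorm_mul _ _
      _ ≤ ((eγ + w) * ‖Z n‖ + w) * (e2γ - 2 * w)⁻¹ := by
          apply mul_le_mul hnum hden (norm_nonneg _)
          positivity
  -- invariant
  have inv : ∀ n, IsUnit (D n) ∧ ‖Z n‖ ≤ 1 := by
    intro n
    induction n with
    | zero =>
      constructor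
      · show IsUnit (𝒳 0).toBlocks₂₂
        rw [h0, ← Matrix.fromBlocks_one, Matrix.toBlocks_fromBlocks₂₂]
        exact isUnit_one
      · show ‖(𝒳 0).toBlocks₁₂ * ((𝒳 0).toBlocks₂₂)⁻¹‖ ≤ 1
        rw [h0, ← Matrix.fromBlocks_one, Matrix.toBlocks_fromBlocks₁₂, Matrix.zero_mul]
        simp
    | succ n ih =>
      obtain ⟨h1, h2⟩ := key n ε ih.1 ih.2 (hW n) le_rfl
      refine ⟨h1, h2.trans ?_⟩
      have hZn0 : (0:ℝ) ≤ ‖Z n‖ := norm_nonneg _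
      have hden : 0 < e2γ - 2 * ε := by rw [hεdef]; linarith
      rw [← div_eq_mul_inv, div_le_one hden]
      have : (eγ + ε) * ‖Z n‖ ≤ (eγ + ε) * 1 := by
        apply mul_le_mul_of_nonneg_left ih.2 (by linarith)
      rw [hεdef] at this ⊢
      nlinarith [this]
  -- conclusion
  intro k
  set t := Real.exp (-(k * γ) / 2) with htdef
  have ht0 : 0 < t := Real.exp_pos _
  have ht1 : t ≤ 1 := by
    rw [htdef, show (1:ℝ) = Real.exp 0 by simp]
    apply Real.exp_le_exp.mpr
    have : (0:ℝ) ≤ (k : ℝ) * γ := by positivity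
    linarith
  set Dm := (e2γ + eγ) / 2 with hDmdef
  have hDm : 0 < Dm := by rw [hDmdef]; linarith
  set r := (eγ + ε) / Dm with hrdef
  have hr0 : 0 < r := by rw [hrdef]; positivity
  have hr1 : r < 1 := by
    rw [hrdef, div_lt_one hDm, hεdef, hDmdef]
    linarith
  set C := 1 / (Dm * (1 - r)) with hCdef
  have hC : 0 < C := by rw [hCdef]; have : 0 < 1 - r := by linarith
                        positivity
  set δ := min ε ((t / 2) / C) with hδdef
  have hδ0 : 0 < δ := lt_min hε0 (by positivity)
  have hδε : δ ≤ ε := min_le_left _ _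
  have hδt : C * δ ≤ t / 2 := by
    have h1 : δ ≤ (t / 2) / C := min_le_right _ _
    calc C * δ ≤ C * ((t / 2) / C) := by gcongr
      _ = t / 2 := by field_simp
  obtain ⟨N, hN⟩ : ∃ N : ℕ, ∀ n ≥ N, ‖W n‖ ≤ δ := by
    have := Metric.tendsto_atTop.mp hW0 δ hδ0
    obtain ⟨N, hN⟩ := this
    exact ⟨N, fun n hn => by
      have := hN n hn
      rw [dist_zero_right] at this
      exact this.le⟩
  -- key algebraic identities for the contraction
  have hrDm : eγ + ε = r * Dm := by rw [hrdef]; field_simp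
  have hCDm : C * (Dm * (1 - r)) = 1 := by
    have hne : Dm * (1 - r) ≠ 0 := by
      have : 0 < 1 - r := by linarith
      positivity
    rw [hCdef, one_div, inv_mul_cancel₀ hne]
  have main : ∀ m : ℕ, ‖Z (N + m)‖ ≤ r ^ m + C * δ := by
    intro m
    induction m with
    | zero =>
      simp only [Nat.add_zero, pow_zero]
      have := (inv N).2
      nlinarith [mul_pos hC hδ0]
    | succ m ih =>
      obtain ⟨_, h2⟩ := key (N + m) δ (inv (N + m)).1 (inv (N + m)).2
        (hN (N + m) (by omega)) hδε
      have hZm0 : (0:ℝ) ≤ ‖Z (N + m)‖ := norm_nonneg _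
      have hpow0 : (0:ℝ) ≤ r ^ m := by positivity
      have hden1 : 0 < e2γ - 2 * δ := by
        have : 2 * δ ≤ 2 * ε := by linarith
        rw [hεdef] at this; linarith
      have hdenDm : Dm ≤ e2γ - 2 * δ := by
        have : 2 * δ ≤ 2 * ε := by linarith
        rw [hεdef] at this; rw [hDmdef]; linarith
      have hstep1 : ((eγ + δ) * ‖Z (N + m)‖ + δ) * (e2γ - 2 * δ)⁻¹
          ≤ ((eγ + ε) * (r ^ m + C * δ) + δ) * Dm⁻¹ := by
        apply mul_le_mul
        · gcongr
        · exact inv_anti₀ hDm hdenDm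
        · positivity
        · have : 0 ≤ (eγ + ε) * (r ^ m + C * δ) := by positivity
          linarith
      have hstep2 : ((eγ + ε) * (r ^ m + C * δ) + δ) * Dm⁻¹ = r ^ (m + 1) + C * δ := by
        rw [← div_eq_mul_inv, div_eq_iff (ne_of_gt hDm), hrDm]
        linear_combination (-δ) * hCDm
      have : N + (m + 1) = (N + m) + 1 := by omega
      rw [this]
      calc ‖Z (N + m + 1)‖ ≤ ((eγ + δ) * ‖Z (N + m)‖ + δ) * (e2γ - 2 * δ)⁻¹ := h2
        _ ≤ ((eγ + ε) * (r ^ m + C * δ) + δ) * Dm⁻¹ := hstep1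
        _ = r ^ (m + 1) + C * δ := hstep2
  obtain ⟨m₀, hm₀⟩ : ∃ m₀ : ℕ, r ^ m₀ < t / 2 := exists_pow_lt_of_lt_one (by positivity) hr1
  refine ⟨N + m₀, fun n hn => ?_⟩
  show ‖Z n‖ ≤ t
  have hn' : n = N + (n - N) := by omega
  have hm : m₀ ≤ n - N := by omega
  calc ‖Z n‖ = ‖Z (N + (n - N))‖ := by rw [← hn']
    _ ≤ r ^ (n - N) + C * δ := main _
    _ ≤ r ^ m₀ + C * δ :=
        add_le_add_left (pow_le_pow_of_le_one hr0.le hr1.le hm) _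
    _ ≤ t / 2 + t / 2 := add_le_add hm₀.le hδt
    _ = t := by ring
end

section
/- The matrix Z_{n+1} admits the decomposition Z_{n+1} = S Zₙ Γ⁻¹ + Mₙ where ‖Mₙ‖ ≤ 4 e^{-2γ} ‖Wₙ‖, assuming ‖S‖ ≤ 1, ‖Zₙ‖ ≤ 1, ‖Z_{n+1}‖ ≤ 1, ‖Γ⁻¹‖ ≤ e^{-2γ} and ‖Wₙ‖ ≤ (e^{2γ}−e^γ)/4. -/
open Matrix
open scoped Matrix.Norms.L2Operator

lemma euclid_norm_mulVec_le {m n m' n' : Type*} [Fintype m] [Fintype n] [Fintype m'] [Fintype n']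
    [DecidableEq n] [DecidableEq n'] [DecidableEq m]
    (f : m' → m) (g : n' → n) (hf : Function.Injective f) (hg : Function.Injective g)
    (A : Matrix m n ℂ) : ‖A.submatrix f g‖ ≤ ‖A‖ := by
  rw [Matrix.l2_opNorm_def]
  refine ContinuousLinearMap.opNorm_le_bound _ (norm_nonneg A) fun x => ?_
  set y : EuclideanSpace ℂ n := (WithLp.equiv 2 (n → ℂ)).symm
    (Function.extend g ((WithLp.equiv 2 (n' → ℂ)) x) 0) with hy
  have hxy : ‖y‖ = ‖x‖ := by
    rw [EuclideanSpace.norm_eq, EuclideanSpace.norm_eq]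
    congr 1
    calc ∑ i : n, ‖y i‖ ^ 2
        = ∑ i ∈ Finset.univ.image g, ‖y i‖ ^ 2 := by
          refine (Finset.sum_subset (Finset.subset_univ _) fun j _ hj => ?_).symm
          have : ¬ ∃ a, g a = j := by
            rintro ⟨a, rfl⟩; exact hj (Finset.mem_image_of_mem g (Finset.mem_univ a))
          simp [hy, Function.extend_apply' _ _ _ this]
      _ = ∑ i : n', ‖y (g i)‖ ^ 2 :=
          Finset.sum_image (fun a _ b _ h => hg h)
      _ = ∑ i : n', ‖x i‖ ^ 2 := by
          refine Finset.sum_congr rfl fun i _ => ?_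
          simp [hy, hg.extend_apply]
  have hval : ∀ i : m', ((A.submatrix f g) *ᵥ (WithLp.equiv 2 (n' → ℂ)) x) i
      = (A *ᵥ (WithLp.equiv 2 (n → ℂ)) y) (f i) := by
    intro i
    simp only [Matrix.mulVec, dotProduct, Matrix.submatrix_apply, hy,
      Equiv.apply_symm_apply]
    calc ∑ j : n', A (f i) (g j) * ((WithLp.equiv 2 (n' → ℂ)) x) j
        = ∑ j : n', A (f i) (g j) * Function.extend g ((WithLp.equiv 2 (n' → ℂ)) x) 0 (g j) := by
          refine Finset.sum_congr rfl fun j _ => ?_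
          rw [hg.extend_apply]
      _ = ∑ j ∈ Finset.univ.image g, A (f i) j * Function.extend g ((WithLp.equiv 2 (n' → ℂ)) x) 0 j := by
          rw [Finset.sum_image (fun a _ b _ h => hg h)]
      _ = ∑ j : n, A (f i) j * Function.extend g ((WithLp.equiv 2 (n' → ℂ)) x) 0 j := by
          refine Finset.sum_subset (Finset.subset_univ _) fun j _ hj => ?_
          have : ¬ ∃ a, g a = j := by
            rintro ⟨a, rfl⟩; exact hj (Finset.mem_image_of_mem g (Finset.mem_univ a))
          rw [Function.extend_apply' _ _ _ this]; simp
  have hle : ‖(LinearMap.toContinuousLinearMap (Matrix.toEuclideanLin (A.submatrix f g))) x‖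
      ≤ ‖(WithLp.equiv 2 (m → ℂ)).symm (A *ᵥ (WithLp.equiv 2 (n → ℂ)) y)‖ := by
    rw [EuclideanSpace.norm_eq, EuclideanSpace.norm_eq]
    refine Real.sqrt_le_sqrt ?_
    calc ∑ i : m', ‖(LinearMap.toContinuousLinearMap (Matrix.toEuclideanLin (A.submatrix f g))) x i‖ ^ 2
        = ∑ i : m', ‖(A *ᵥ (WithLp.equiv 2 (n → ℂ)) y) (f i)‖ ^ 2 := by
          refine Finset.sum_congr rfl fun i _ => ?_
          rw [show (LinearMap.toContinuousLinearMap (Matrix.toEuclideanLin (A.submatrix f g))) x i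
              = ((A.submatrix f g) *ᵥ (WithLp.equiv 2 (n' → ℂ)) x) i from rfl, hval i]
      _ = ∑ i ∈ Finset.univ.image f, ‖(A *ᵥ (WithLp.equiv 2 (n → ℂ)) y) i‖ ^ 2 := by
          rw [Finset.sum_image (fun a _ b _ h => hf h)]
      _ ≤ ∑ i : m, ‖(A *ᵥ (WithLp.equiv 2 (n → ℂ)) y) i‖ ^ 2 :=
          Finset.sum_le_sum_of_subset_of_nonneg (Finset.subset_univ _)
            (fun i _ _ => by positivity)
      _ = ∑ i : m, ‖((WithLp.equiv 2 (m → ℂ)).symm (A *ᵥ (WithLp.equiv 2 (n → ℂ)) y)) i‖ ^ 2 := rfl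
  calc ‖(Matrix.toEuclideanLin.trans LinearMap.toContinuousLinearMap) (A.submatrix f g) x‖
      = ‖(LinearMap.toContinuousLinearMap (Matrix.toEuclideanLin (A.submatrix f g))) x‖ := rfl
    _ ≤ ‖(WithLp.equiv 2 (m → ℂ)).symm (A *ᵥ (WithLp.equiv 2 (n → ℂ)) y)‖ := hle
    _ ≤ ‖A‖ * ‖y‖ := by
        have := Matrix.l2_opNorm_mulVec A y
        simpa using this
    _ = ‖A‖ * ‖x‖ := by rw [hxy]

/-- Decomposition `Z' = S Z Γ⁻¹ + M` with `‖M‖ ≤ 4 e^{-2γ} ‖W‖`, where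
`Z' = ((S+a)Z + b)(cZ + Γ + d)⁻¹` and `a, b, c, d` are the blocks of `W`. -/
theorem stmt9 (l₀ l₁ : ℕ) (γ : ℝ) (hγ : 0 < γ)
    (S : Matrix (Fin l₀) (Fin l₀) ℂ) (Γ : Matrix (Fin l₁) (Fin l₁) ℂ)
    (W : Matrix (Fin l₀ ⊕ Fin l₁) (Fin l₀ ⊕ Fin l₁) ℂ)
    (Z Z' : Matrix (Fin l₀) (Fin l₁) ℂ)
    (hS : ‖S‖ ≤ 1) (hZ : ‖Z‖ ≤ 1) (hZ' : ‖Z'‖ ≤ 1)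
    (hΓunit : IsUnit Γ) (hΓ : ‖Γ⁻¹‖ ≤ Real.exp (-(2 * γ)))
    (hW : ‖W‖ ≤ (Real.exp (2 * γ) - Real.exp γ) / 4)
    (hZ'def : Z' = ((S + W.toBlocks₁₁) * Z + W.toBlocks₁₂) *
        (W.toBlocks₂₁ * Z + Γ + W.toBlocks₂₂)⁻¹) :
    ∃ M : Matrix (Fin l₀) (Fin l₁) ℂ,
      Z' = S * Z * Γ⁻¹ + M ∧ ‖M‖ ≤ 4 * Real.exp (-(2 * γ)) * ‖W‖ := by
  set a := W.toBlocks₁₁ with ha'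
  set b := W.toBlocks₁₂ with hb'
  set c := W.toBlocks₂₁ with hc'
  set d := W.toBlocks₂₂ with hd'
  have ha : ‖a‖ ≤ ‖W‖ :=
    euclid_norm_mulVec_le Sum.inl Sum.inl Sum.inl_injective Sum.inl_injective W
  have hb : ‖b‖ ≤ ‖W‖ :=
    euclid_norm_mulVec_le Sum.inl Sum.inr Sum.inl_injective Sum.inr_injective W
  have hc : ‖c‖ ≤ ‖W‖ :=
    euclid_norm_mulVec_le Sum.inr Sum.inl Sum.inr_injective Sum.inl_injective W
  have hd : ‖d‖ ≤ ‖W‖ :=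
    euclid_norm_mulVec_le Sum.inr Sum.inr Sum.inr_injective Sum.inr_injective W
  have hWnn : (0:ℝ) ≤ ‖W‖ := norm_nonneg W
  set E := c * Z + d with hE'
  have hcZ : ‖c * Z‖ ≤ ‖W‖ := by
    calc ‖c * Z‖ ≤ ‖c‖ * ‖Z‖ := Matrix.l2_opNorm_mul c Z
      _ ≤ ‖W‖ * 1 := mul_le_mul hc hZ (norm_nonneg Z) hWnn
      _ = ‖W‖ := mul_one _
  have hE : ‖E‖ ≤ 2 * ‖W‖ := by
    calc ‖E‖ ≤ ‖c * Z‖ + ‖d‖ := norm_add_le _ _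
      _ ≤ 2 * ‖W‖ := by linarith
  have hexp1 : Real.exp (-(2 * γ)) * Real.exp (2 * γ) = 1 := by
    rw [← Real.exp_add]; simp
  have hexp2 : Real.exp (-(2 * γ)) * Real.exp γ = Real.exp (-γ) := by
    rw [← Real.exp_add]; ring_nf
  have hexppos : (0:ℝ) < Real.exp (-γ) := Real.exp_pos _
  have hexppos2 : (0:ℝ) < Real.exp (-(2 * γ)) := Real.exp_pos _
  have hΓE : ‖Γ⁻¹ * E‖ < 1 := by
    calc ‖Γ⁻¹ * E‖ ≤ ‖Γ⁻¹‖ * ‖E‖ := Matrix.l2_opNorm_mul _ _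
      _ ≤ Real.exp (-(2 * γ)) * (2 * ‖W‖) :=
          mul_le_mul hΓ hE (norm_nonneg E) hexppos2.le
      _ < 1 := by nlinarith
  have hu : IsUnit ((1 : Matrix (Fin l₁) (Fin l₁) ℂ) + Γ⁻¹ * E) := by
    have := (Units.oneSub (-(Γ⁻¹ * E)) (by rwa [norm_neg])).isUnit
    rwa [Units.val_oneSub, sub_neg_eq_add] at this
  have hΓdet : IsUnit Γ.det := (Matrix.isUnit_iff_isUnit_det Γ).mp hΓunit
  have hDfac : c * Z + Γ + d = Γ * (1 + Γ⁻¹ * E) := by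
    rw [mul_add, mul_one, ← Matrix.mul_assoc, Matrix.mul_nonsing_inv Γ hΓdet, Matrix.one_mul]
    rw [hE']; abel
  have hDunit : IsUnit (c * Z + Γ + d) := by rw [hDfac]; exact hΓunit.mul hu
  have hDdet : IsUnit (c * Z + Γ + d).det :=
    (Matrix.isUnit_iff_isUnit_det _).mp hDunit
  have key : Z' * (c * Z + Γ + d) = (S + a) * Z + b := by
    rw [hZ'def]; exact Matrix.nonsing_inv_mul_cancel_right _ _ hDdet
  have key2 : Z' * Γ = S * Z + (a * Z + b - Z' * E) := by
    have : Z' * Γ + Z' * E = (S + a) * Z + b := by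
      rw [← Matrix.mul_add, hE']
      rw [show Γ + (c * Z + d) = c * Z + Γ + d by abel]
      exact key
    have h2 : Z' * Γ = (S + a) * Z + b - Z' * E := by
      rw [← this]; noncomm_ring
    rw [h2, Matrix.add_mul]; abel
  refine ⟨(a * Z + b - Z' * E) * Γ⁻¹, ?_, ?_⟩
  · have := congrArg (· * Γ⁻¹) key2
    rwa [Matrix.mul_nonsing_inv_cancel_right _ _ hΓdet, Matrix.add_mul] at this
  · have hnum : ‖a * Z + b - Z' * E‖ ≤ 4 * ‖W‖ := by
      have h1 : ‖a * Z‖ ≤ ‖W‖ := by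
        calc ‖a * Z‖ ≤ ‖a‖ * ‖Z‖ := Matrix.l2_opNorm_mul _ _
          _ ≤ ‖W‖ * 1 := mul_le_mul ha hZ (norm_nonneg Z) hWnn
          _ = ‖W‖ := mul_one _
      have h2 : ‖Z' * E‖ ≤ 2 * ‖W‖ := by
        calc ‖Z' * E‖ ≤ ‖Z'‖ * ‖E‖ := Matrix.l2_opNorm_mul _ _
          _ ≤ 1 * (2 * ‖W‖) := mul_le_mul hZ' hE (norm_nonneg E) (by linarith [norm_nonneg Z'])
          _ = 2 * ‖W‖ := one_mul _
      calc ‖a * Z + b - Z' * E‖ ≤ ‖a * Z + b‖ + ‖Z' * E‖ := norm_sub_le _ _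
        _ ≤ ‖a * Z‖ + ‖b‖ + ‖Z' * E‖ := by linarith [norm_add_le (a * Z) b]
        _ ≤ 4 * ‖W‖ := by linarith
    calc ‖(a * Z + b - Z' * E) * Γ⁻¹‖ ≤ ‖a * Z + b - Z' * E‖ * ‖Γ⁻¹‖ :=
          Matrix.l2_opNorm_mul _ _
      _ ≤ (4 * ‖W‖) * Real.exp (-(2 * γ)) :=
          mul_le_mul hnum hΓ (norm_nonneg _) (by linarith)
      _ = 4 * Real.exp (-(2 * γ)) * ‖W‖ := by ring
end

section
/- Let H be a block Jacobi operator (HΨ)ₙ = −Ψ_{n−1} − Ψ_{n+1} + BₙΨₙ on ℓ²(ℤ₊)⊗ℂˡ and H_{m,n} its restriction to sites m,…,n. Define the boundary resolvent data α, β, γ, δ by (α β; γ δ) = (P_m*; P_n*)(H_{m,n} − z)⁻¹(P_m, P_n). If z ∉ σ(H_{m,n}) and β is invertible, then the transfer matrix product satisfies T^z_{m,n} = (β⁻¹, −β⁻¹α; δβ⁻¹, γ − δβ⁻¹α). -/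
/-!
The columns `u_k = G(k, 0)` and `v_k = G(k, N)` of the resolvent `G = (H - z)⁻¹` solve the
three-term recurrence `x_{k+1} = (B_k - z) x_k - x_{k-1}` once the source term of `(H - z) G = 1`
is absorbed into ghost values: `u_{-1} = 1, u_{N+1} = 0` and `v_{-1} = 0, v_{N+1} = 1`.
Hence the transfer product maps `(b a; 0 1)`, the values of `(v u)` at sites `0, -1`, to
`(1 0; d c)`, their values at sites `N + 1, N`; inverting the triangular matrix `(b a; 0 1)`
gives the formula.
-/

open Matrix

theorem transfer_prod_mul_fromRows {R ι κ : Type*} [Ring R] [Fintype ι] [DecidableEq ι] {K : ℕ}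
    (A : Fin K → Matrix ι ι R) (x : ℕ → Matrix ι κ R)
    (hx : ∀ k : Fin K, x (k + 2) = A k * x (k + 1) - x k) :
    ((List.finRange K).map fun k =>
        (fromBlocks (A k) (-1) 1 0 : Matrix (ι ⊕ ι) (ι ⊕ ι) R)).reverse.prod *
        fromRows (x 1) (x 0) = fromRows (x (K + 1)) (x K) := by
  induction K with
  | zero => simp [Matrix.one_mul]
  | succ K ih =>
    rw [← List.ofFn_eq_map, List.ofFn_succ', List.concat_eq_append, List.reverse_append,
      List.prod_append, List.ofFn_eq_map, List.reverse_singleton, List.prod_singleton,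
      Matrix.mul_assoc, ih (fun k => A k.castSucc) (fun k => hx k.castSucc),
      fromBlocks_mul_fromRows, Matrix.one_mul, Matrix.zero_mul, add_zero, Matrix.neg_mul,
      Matrix.one_mul, ← sub_eq_add_neg]
    exact congrArg₂ fromRows (hx (Fin.last K)).symm rfl

section Blocks

variable {R ι κ : Type*}

theorem submatrix_mul_eq_sum_prodMk [Fintype ι] [Fintype κ] [NonUnitalNonAssocSemiring R]
    {α β γ δ : Type*} (M : Matrix α (κ × ι) R) (M' : Matrix (κ × ι) β R) (f : γ → α)
    (g : δ → β) :
    (M * M').submatrix f g = ∑ k, M.submatrix f (Prod.mk k) * M'.submatrix (Prod.mk k) g := by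
  ext r s
  simp [mul_apply, Fintype.sum_prod_type, Matrix.sum_apply]

variable [DecidableEq ι] [DecidableEq κ]

theorem one_submatrix_prodMk [Semiring R] (j m : κ) :
    (1 : Matrix (κ × ι) (κ × ι) R).submatrix (Prod.mk j) (Prod.mk m) = if j = m then 1 else 0 := by
  ext r s
  by_cases h : j = m <;> simp [one_apply, h]

def shellEmbedding [Zero R] [One R] (k : κ) : Matrix (κ × ι) ι R :=
  of fun p q => if p.1 = k ∧ p.2 = q then 1 else 0

theorem conjTranspose_shellEmbedding_mul_mul [Fintype ι] [Fintype κ] [Semiring R] [StarRing R]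
    (M : Matrix (κ × ι) (κ × ι) R) (j m : κ) :
    (shellEmbedding j : Matrix (κ × ι) ι R)ᴴ * M * (shellEmbedding m : Matrix (κ × ι) ι R) =
      M.submatrix (Prod.mk j) (Prod.mk m) := by
  ext r s
  simp [shellEmbedding, mul_apply, Fintype.sum_prod_type, ite_and, apply_ite]

end Blocks

section BlockJacobi

variable {R ι : Type*} [Ring R] [DecidableEq ι] {n : ℕ}

def blockJacobi (B : Fin n → Matrix ι ι R) : Matrix (Fin n × ι) (Fin n × ι) R :=
  of fun p q =>
    if p.1 = q.1 then B p.1 p.2 q.2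
    else if (p.1 : ℕ) + 1 = (q.1 : ℕ) ∨ (q.1 : ℕ) + 1 = (p.1 : ℕ) then
      (if p.2 = q.2 then -1 else 0)
    else 0

theorem blockJacobi_sub_smul_one_submatrix (B : Fin n → Matrix ι ι R) (z : R) (j k : Fin n) :
    (blockJacobi B - z • 1).submatrix (Prod.mk j) (Prod.mk k) =
      (if j = k then B j - z • 1 else 0) - (if (k : ℕ) = j + 1 then 1 else 0) -
        (if (k : ℕ) + 1 = j then 1 else 0) := by
  ext r s
  simp only [blockJacobi, submatrix_apply, Matrix.sub_apply, Matrix.smul_apply, of_apply]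
  split_ifs <;> first | omega | simp_all [Matrix.one_apply]

end BlockJacobi

section BlockColumn

variable {R ι : Type*} {n : ℕ} (G : Matrix (Fin n × ι) (Fin n × ι) R) (m : Fin n)

-- Shifted by one: entry `k + 1` is the block `(k, m)`, entry `0` is the ghost site `-1`.
def blockColumn [AddCommMonoid R] (i : ℕ) : Matrix ι ι R :=
  ∑ k : Fin n, if (k : ℕ) + 1 = i then G.submatrix (Prod.mk k) (Prod.mk m) else 0

theorem blockColumn_zero [AddCommMonoid R] : blockColumn G m 0 = 0 := by
  simp [blockColumn]

theorem blockColumn_succ [AddCommMonoid R] (j : Fin n) :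
    blockColumn G m (j + 1) = G.submatrix (Prod.mk j) (Prod.mk m) := by
  simp [blockColumn, Fin.val_inj]

theorem blockColumn_of_lt [AddCommMonoid R] {i : ℕ} (h : n < i) : blockColumn G m i = 0 :=
  Finset.sum_eq_zero fun k _ => if_neg (by omega)

theorem blockColumn_recurrence [Ring R] [Fintype ι] [DecidableEq ι] (B : Fin n → Matrix ι ι R)
    (z : R) (hG : (blockJacobi B - z • 1) * G = 1) (j : Fin n) :
    blockColumn G m (j + 2) =
      (B j - z • 1) * blockColumn G m (j + 1) - blockColumn G m j - if j = m then 1 else 0 := by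
  have h := congrArg (·.submatrix (Prod.mk j) (Prod.mk m)) hG
  rw [submatrix_mul_eq_sum_prodMk, one_submatrix_prodMk] at h
  simp only [blockJacobi_sub_smul_one_submatrix, Matrix.sub_mul, ite_mul, Matrix.one_mul,
    Matrix.zero_mul, Finset.sum_sub_distrib, Finset.sum_ite_eq, Finset.mem_univ, if_true] at h
  have hnext : blockColumn G m (j + 2) =
      ∑ k : Fin n, if (k : ℕ) = j + 1 then G.submatrix (Prod.mk k) (Prod.mk m) else 0 :=
    Finset.sum_congr rfl fun k _ => if_congr (by omega) rfl rfl
  rw [hnext, blockColumn_succ, blockColumn, ← h, Matrix.sub_mul]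
  abel

end BlockColumn

section Boundary

open Function

variable {R ι : Type*} [Ring R] [Fintype ι] [DecidableEq ι] {N : ℕ}
  {G : Matrix (Fin (N + 1) × ι) (Fin (N + 1) × ι) R} {B : Fin (N + 1) → Matrix ι ι R} {z : R}

-- The ghost value `1` at site `-1`, resp. `N + 1`, absorbs the source term `δ_{jm}`.
theorem update_blockColumn_zero_recurrence (hG : (blockJacobi B - z • 1) * G = 1)
    (k : Fin (N + 1)) :
    update (blockColumn G 0) 0 1 (k + 2) =
      (B k - z • 1) * update (blockColumn G 0) 0 1 (k + 1) - update (blockColumn G 0) 0 1 k := by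
  have h := blockColumn_recurrence G 0 B z hG k
  rcases eq_or_ne k 0 with rfl | hk
  · simpa [blockColumn_zero] using h
  · have : (k : ℕ) ≠ 0 := Fin.val_ne_zero_iff.mpr hk
    simpa [hk, this] using h

theorem update_blockColumn_last_recurrence (hG : (blockJacobi B - z • 1) * G = 1)
    (k : Fin (N + 1)) :
    update (blockColumn G (Fin.last N)) (N + 2) 1 (k + 2) =
      (B k - z • 1) * update (blockColumn G (Fin.last N)) (N + 2) 1 (k + 1) -
        update (blockColumn G (Fin.last N)) (N + 2) 1 k := by
  have h := blockColumn_recurrence G (Fin.last N) B z hG k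
  rw [update_of_ne (by omega : (k : ℕ) + 1 ≠ N + 2), update_of_ne (by omega : (k : ℕ) ≠ N + 2)]
  rcases eq_or_ne k (Fin.last N) with rfl | hk
  · rw [Fin.val_last, blockColumn_of_lt _ _ (by omega)] at h
    simpa using (sub_eq_zero.mp h.symm).symm
  · have : (k : ℕ) ≠ N := Fin.val_ne_iff.mpr hk
    simpa [hk, this] using h

end Boundary

theorem eq_fromBlocks_of_mul_fromBlocks_eq {R ι : Type*} [CommRing R] [Fintype ι] [DecidableEq ι]
    {X : Matrix (ι ⊕ ι) (ι ⊕ ι) R} {a b c d : Matrix ι ι R} (hb : IsUnit b)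
    (h : X * fromBlocks b a 0 (1 : Matrix ι ι R) = fromBlocks (1 : Matrix ι ι R) 0 d c) :
    X = fromBlocks b⁻¹ (-(b⁻¹ * a)) (d * b⁻¹) (c - d * b⁻¹ * a) := by
  have hbb : b * b⁻¹ = 1 := mul_nonsing_inv b ((isUnit_iff_isUnit_det b).mp hb)
  have hK : fromBlocks b a 0 (1 : Matrix ι ι R) * fromBlocks b⁻¹ (-(b⁻¹ * a)) 0 1 = 1 := by
    simp [fromBlocks_multiply, hbb, ← Matrix.mul_assoc]
  calc X = X * fromBlocks b a 0 1 * fromBlocks b⁻¹ (-(b⁻¹ * a)) 0 1 := by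
        rw [mul_assoc, hK, mul_one]
    _ = _ := by
        rw [h, fromBlocks_multiply]
        simp [Matrix.mul_assoc, sub_eq_neg_add]

theorem stmt15_general (l N : ℕ) (B : Fin (N + 1) → Matrix (Fin l) (Fin l) ℂ)
    (z : ℂ)
    (H : Matrix (Fin (N + 1) × Fin l) (Fin (N + 1) × Fin l) ℂ)
    (hH : H = Matrix.of fun p q =>
      if p.1 = q.1 then B p.1 p.2 q.2
      else if (p.1 : ℕ) + 1 = (q.1 : ℕ) ∨ (q.1 : ℕ) + 1 = (p.1 : ℕ) then
        (if p.2 = q.2 then -1 else 0)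
      else 0)
    (P : Fin (N + 1) → Matrix (Fin (N + 1) × Fin l) (Fin l) ℂ)
    (hP : ∀ k, P k = Matrix.of fun p q => if p.1 = k ∧ p.2 = q then 1 else 0)
    (hz : IsUnit (H - z • 1))
    (a b c d : Matrix (Fin l) (Fin l) ℂ)
    (ha : a = (P 0)ᴴ * (H - z • 1)⁻¹ * P 0)
    (hb : b = (P 0)ᴴ * (H - z • 1)⁻¹ * P (Fin.last N))
    (hc : c = (P (Fin.last N))ᴴ * (H - z • 1)⁻¹ * P 0)
    (hd : d = (P (Fin.last N))ᴴ * (H - z • 1)⁻¹ * P (Fin.last N))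
    (hβ : IsUnit b)
    (T : Fin (N + 1) → Matrix (Fin l ⊕ Fin l) (Fin l ⊕ Fin l) ℂ)
    (hT : ∀ k, T k = Matrix.fromBlocks (B k - z • 1) (-1) 1 0) :
    (((List.finRange (N + 1)).map T).reverse.prod) =
      Matrix.fromBlocks b⁻¹ (-(b⁻¹ * a)) (d * b⁻¹) (c - d * b⁻¹ * a) := by
  obtain rfl : H = blockJacobi B := hH
  obtain rfl : P = shellEmbedding := funext hP
  obtain rfl : T = fun k => fromBlocks (B k - z • 1) (-1) 1 0 := funext hT
  set G := (blockJacobi B - z • 1)⁻¹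
  have hG : (blockJacobi B - z • 1) * G = 1 := mul_nonsing_inv _ ((isUnit_iff_isUnit_det _).mp hz)
  simp only [conjTranspose_shellEmbedding_mul_mul, ← blockColumn_succ, Fin.val_zero, Fin.val_last,
    zero_add] at ha hb hc hd
  set M := ((List.finRange (N + 1)).map fun k =>
    (fromBlocks (B k - z • 1) (-1) 1 0 : Matrix (Fin l ⊕ Fin l) (Fin l ⊕ Fin l) ℂ)).reverse.prod
  have hu : M * fromRows a (1 : Matrix (Fin l) (Fin l) ℂ) = fromRows 0 c := by
    simpa [← ha, ← hc, blockColumn_zero, blockColumn_of_lt] using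
      transfer_prod_mul_fromRows _ _ (update_blockColumn_zero_recurrence hG)
  have hv : M * fromRows b (0 : Matrix (Fin l) (Fin l) ℂ) = fromRows 1 d := by
    simpa [← hb, ← hd, blockColumn_zero, blockColumn_of_lt] using
      transfer_prod_mul_fromRows _ _ (update_blockColumn_last_recurrence hG)
  refine eq_fromBlocks_of_mul_fromBlocks_eq hβ ?_
  rw [← fromCols_fromRows_eq_fromBlocks, mul_fromCols, hv, hu, fromCols_fromRows_eq_fromBlocks]

/-- Transfer matrices from resolvent boundary data: for the restriction
`H_{0,N}` of a block Jacobi operator to sites `0, …, N`, with boundary data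
`(α β; γ δ) = (P₀*; P_N*)(H - z)⁻¹(P₀, P_N)`, if `z ∉ σ(H)` and `β` is
invertible then `T^z_N ⋯ T^z_0 = (β⁻¹, -β⁻¹α; δβ⁻¹, γ - δβ⁻¹α)`. -/
theorem stmt15 (l N : ℕ) (B : Fin (N + 1) → Matrix (Fin l) (Fin l) ℂ)
    (hB : ∀ i, (B i).IsHermitian) (z : ℂ)
    (H : Matrix (Fin (N + 1) × Fin l) (Fin (N + 1) × Fin l) ℂ)
    (hH : H = Matrix.of fun p q =>
      if p.1 = q.1 then B p.1 p.2 q.2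
      else if (p.1 : ℕ) + 1 = (q.1 : ℕ) ∨ (q.1 : ℕ) + 1 = (p.1 : ℕ) then
        (if p.2 = q.2 then -1 else 0)
      else 0)
    (P : Fin (N + 1) → Matrix (Fin (N + 1) × Fin l) (Fin l) ℂ)
    (hP : ∀ k, P k = Matrix.of fun p q => if p.1 = k ∧ p.2 = q then 1 else 0)
    (hz : IsUnit (H - z • 1))
    (a b c d : Matrix (Fin l) (Fin l) ℂ)
    (ha : a = (P 0)ᴴ * (H - z • 1)⁻¹ * P 0)
    (hb : b = (P 0)ᴴ * (H - z • 1)⁻¹ * P (Fin.last N))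
    (hc : c = (P (Fin.last N))ᴴ * (H - z • 1)⁻¹ * P 0)
    (hd : d = (P (Fin.last N))ᴴ * (H - z • 1)⁻¹ * P (Fin.last N))
    (hβ : IsUnit b)
    (T : Fin (N + 1) → Matrix (Fin l ⊕ Fin l) (Fin l ⊕ Fin l) ℂ)
    (hT : ∀ k, T k = Matrix.fromBlocks (B k - z • 1) (-1) 1 0) :
    (((List.finRange (N + 1)).map T).reverse.prod) =
      Matrix.fromBlocks b⁻¹ (-(b⁻¹ * a)) (d * b⁻¹) (c - d * b⁻¹ * a) :=
  stmt15_general l N B z H hH P hP hz a b c d ha hb hc hd hβ T hT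
end

section
/- Let (fₙ) be a sequence of nonnegative functions on (a,b) with liminf_{n→∞} ∫ₐᵇ fₙ(λ)² dλ < ∞, and suppose the measures fₙ(λ)dλ converge weakly to a finite measure μ on (a,b). Then μ is absolutely continuous on (a,b) with density in L²(a,b). -/
open MeasureTheory Filter
open scoped ENNReal NNReal

/-- If nonnegative densities `fₙ` on `(a,b)` have `liminf ∫ fₙ² < ∞` and the
measures `fₙ dλ` converge weakly to a finite measure `μ` on `(a,b)`, then `μ`
is absolutely continuous on `(a,b)` with density in `L²(a,b)`. -/
theorem stmt17 (a b : ℝ) (hab : a < b) (f : ℕ → ℝ → ℝ)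
    (hmeas : ∀ n, Measurable (f n))
    (hpos : ∀ n, ∀ x ∈ Set.Ioo a b, 0 ≤ f n x)
    (hint : ∀ n, MeasureTheory.Integrable (fun x => (f n x) ^ 2)
      (volume.restrict (Set.Ioo a b)))
    (hliminf : ∃ C : ℝ, ∃ᶠ n in atTop,
      ∫ x in Set.Ioo a b, (f n x) ^ 2 ≤ C)
    (μ : Measure ℝ) (hμ : IsFiniteMeasure μ)
    (hweak : ∀ g : ℝ → ℝ, Continuous g → (∃ Cg : ℝ, ∀ x, |g x| ≤ Cg) →
      Tendsto (fun n => ∫ x in Set.Ioo a b, g x * f n x) atTop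
        (nhds (∫ x in Set.Ioo a b, g x ∂μ))) :
    ∃ fl : ℝ → ℝ, MeasureTheory.MemLp fl 2 (volume.restrict (Set.Ioo a b)) ∧
      μ.restrict (Set.Ioo a b) =
        (volume.restrict (Set.Ioo a b)).withDensity
          (fun x => ENNReal.ofReal (fl x)) := by
  classical
  set ν : Measure ℝ := volume.restrict (Set.Ioo a b) with hνdef
  set μ' : Measure ℝ := μ.restrict (Set.Ioo a b) with hμ'def
  haveI : IsFiniteMeasure ν :=
    ⟨by rw [hνdef, Measure.restrict_apply_univ]; exact measure_Ioo_lt_top⟩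
  haveI : IsFiniteMeasure μ' := by rw [hμ'def]; infer_instance
  obtain ⟨C, hC⟩ := hliminf
  obtain ⟨φ, hφmono, hφC⟩ := extraction_of_frequently_atTop hC
  set C' : ℝ := max C 0 with hC'def
  have hC'nonneg : 0 ≤ C' := le_max_right _ _
  set S : ℝ := C' ^ (1 / 2 : ℝ) with hSdef
  have hSnonneg : 0 ≤ S := Real.rpow_nonneg hC'nonneg _
  have hS2 : S ^ 2 = C' := by
    rw [hSdef, ← Real.rpow_natCast (C' ^ (1 / 2 : ℝ)) 2, ← Real.rpow_mul hC'nonneg]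
    norm_num
  -- pointwise norm-rpow to square conversion
  have hnorm_sq : ∀ y : ℝ, ‖y‖ ^ (2 : ℝ) = y ^ 2 := fun y => by
    rw [Real.norm_eq_abs, show (2 : ℝ) = ((2 : ℕ) : ℝ) by norm_num, Real.rpow_natCast, sq_abs]
  have hint_sq : ∀ u : ℝ → ℝ, ∫ x, ‖u x‖ ^ (2 : ℝ) ∂ν = ∫ x, u x ^ 2 ∂ν := fun u =>
    integral_congr_ae (ae_of_all _ fun x => hnorm_sq (u x))
  -- `eLpNorm` in terms of integrals of squares, for Memℒp functions
  have heLp : ∀ u : ℝ → ℝ, MemLp u 2 ν →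
      (eLpNorm u 2 ν).toReal = (∫ x, u x ^ 2 ∂ν) ^ (1 / 2 : ℝ) := by
    intro u hu
    have h2 : (2 : ℝ≥0∞) ≠ 0 := by norm_num
    have h2' : (2 : ℝ≥0∞) ≠ ∞ := by norm_num
    rw [hu.eLpNorm_eq_integral_rpow_norm h2 h2']
    rw [ENNReal.toReal_ofReal]
    · rw [show ((2 : ℝ≥0∞).toReal) = (2:ℝ) by norm_num, hint_sq]
      norm_num
    · positivity
  have hmem : ∀ n, MemLp (f n) 2 ν := fun n =>
    (memLp_two_iff_integrable_sq (hmeas n).aestronglyMeasurable).2 (hint n)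
  have hsq_nonneg : ∀ n, 0 ≤ ∫ x, f n x ^ 2 ∂ν := fun n =>
    integral_nonneg fun x => sq_nonneg _
  -- Step A: the bound for bounded continuous functions
  have keyA : ∀ g : ℝ → ℝ, Continuous g → (∃ Cg : ℝ, ∀ x, |g x| ≤ Cg) →
      |∫ x, g x ∂μ'| ≤ S * (eLpNorm g 2 ν).toReal := by
    intro g hg ⟨Cg, hCg⟩
    have hgmem : MemLp g 2 ν := MemLp.of_bound hg.aestronglyMeasurable Cg
      (ae_of_all _ fun x => by simpa [Real.norm_eq_abs] using hCg x)
    have hconj : Real.HolderConjugate 2 2 := ⟨by norm_num, by norm_num, by norm_num⟩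
    have h2 : ENNReal.ofReal (2:ℝ) = 2 := by norm_num
    have hbd : ∀ k, |∫ x, g x * f (φ k) x ∂ν| ≤ S * (eLpNorm g 2 ν).toReal := by
      intro k
      have hcs : ∫ x, ‖g x‖ * ‖f (φ k) x‖ ∂ν ≤
          (∫ x, ‖g x‖ ^ (2:ℝ) ∂ν) ^ (1 / 2 : ℝ) * (∫ x, ‖f (φ k) x‖ ^ (2:ℝ) ∂ν) ^ (1 / 2 : ℝ) :=
        integral_mul_norm_le_Lp_mul_Lq hconj (h2 ▸ hgmem) (h2 ▸ hmem (φ k))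
      have habs : |∫ x, g x * f (φ k) x ∂ν| ≤ ∫ x, ‖g x‖ * ‖f (φ k) x‖ ∂ν := by
        calc |∫ x, g x * f (φ k) x ∂ν| ≤ ∫ x, ‖g x * f (φ k) x‖ ∂ν := by
              rw [← Real.norm_eq_abs]; exact norm_integral_le_integral_norm _
          _ = ∫ x, ‖g x‖ * ‖f (φ k) x‖ ∂ν := integral_congr_ae (ae_of_all _ fun x => norm_mul _ _)
      have hf2 : (∫ x, ‖f (φ k) x‖ ^ (2:ℝ) ∂ν) ^ (1 / 2 : ℝ) ≤ S := by
        rw [hint_sq]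
        exact Real.rpow_le_rpow (hsq_nonneg _) ((hφC k).trans (le_max_left _ _)) (by norm_num)
      have hg2 : (∫ x, ‖g x‖ ^ (2:ℝ) ∂ν) ^ (1 / 2 : ℝ) = (eLpNorm g 2 ν).toReal := by
        rw [heLp g hgmem, hint_sq]
      calc |∫ x, g x * f (φ k) x ∂ν| ≤
            (∫ x, ‖g x‖ ^ (2:ℝ) ∂ν) ^ (1 / 2 : ℝ) * (∫ x, ‖f (φ k) x‖ ^ (2:ℝ) ∂ν) ^ (1 / 2 : ℝ) :=
            habs.trans hcs
        _ ≤ (eLpNorm g 2 ν).toReal * S := by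
            rw [← hg2]
            exact mul_le_mul_of_nonneg_left hf2 (Real.rpow_nonneg
              (integral_nonneg fun x => Real.rpow_nonneg (norm_nonneg _) _) _)
        _ = S * (eLpNorm g 2 ν).toReal := mul_comm _ _
    have htend : Tendsto (fun k => ∫ x, g x * f (φ k) x ∂ν) atTop (nhds (∫ x, g x ∂μ')) :=
      (hweak g hg ⟨Cg, hCg⟩).comp hφmono.tendsto_atTop
    exact le_of_tendsto htend.abs (Eventually.of_forall hbd)
  -- Step B: extend the bound to bounded measurable functions
  have keyB : ∀ h : ℝ → ℝ, Measurable h → (∃ M : ℝ, ∀ x, |h x| ≤ M) →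
      |∫ x, h x ∂μ'| ≤ S * (eLpNorm h 2 ν).toReal := by
    intro h hhm ⟨M, hM⟩
    set ρ : Measure ℝ := ν + μ' with hρdef
    haveI : IsFiniteMeasure ρ := by rw [hρdef]; infer_instance
    haveI : ρ.WeaklyRegular := inferInstance
    have hνρ : ν ≤ ρ := Measure.le_add_right le_rfl
    have hμ'ρ : μ' ≤ ρ := Measure.le_add_left le_rfl
    have hhbd : ∀ᵐ x ∂ρ, ‖h x‖ ≤ M := ae_of_all _ fun x => by
      simpa [Real.norm_eq_abs] using hM x
    have hhmemρ : MemLp h 2 ρ := MemLp.of_bound hhm.aestronglyMeasurable M hhbd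
    have hhmemν : MemLp h 2 ν := MemLp.of_bound hhm.aestronglyMeasurable M
      (ae_of_all _ fun x => by simpa [Real.norm_eq_abs] using hM x)
    have hhintμ' : Integrable h μ' :=
      memLp_one_iff_integrable.1 (MemLp.of_bound hhm.aestronglyMeasurable M
        (ae_of_all _ fun x => by simpa [Real.norm_eq_abs] using hM x))
    set K : ℝ := (μ' Set.univ).toReal ^ (1 / 2 : ℝ) with hKdef
    have hKnonneg : 0 ≤ K := Real.rpow_nonneg ENNReal.toReal_nonneg _
    have main : ∀ ε : ℝ, 0 < ε →
        |∫ x, h x ∂μ'| ≤ S * (eLpNorm h 2 ν).toReal + ε * (K + S) := by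
      intro ε hε
      obtain ⟨g, hgdist, hgmem⟩ := hhmemρ.exists_boundedContinuous_eLpNorm_sub_le
        (by norm_num : (2:ℝ≥0∞) ≠ ∞) (ε := ENNReal.ofReal ε)
        (by simpa [ENNReal.ofReal_eq_zero, not_le] using hε)
      set d : ℝ → ℝ := fun x => h x - g x with hddef
      have hdm : AEStronglyMeasurable d ρ :=
        (hhm.aestronglyMeasurable.sub g.continuous.measurable.aestronglyMeasurable)
      have hdist : eLpNorm d 2 ρ ≤ ENNReal.ofReal ε := by
        simpa [hddef, Pi.sub_def] using hgdist
      -- bound on ∫ d dμ'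
      have hgintμ' : Integrable (⇑g) μ' := g.integrable μ'
      have hdint : Integrable d μ' := hhintμ'.sub hgintμ'
      have hd1 : |∫ x, d x ∂μ'| ≤ ε * K := by
        have e1 : |∫ x, d x ∂μ'| ≤ ∫ x, ‖d x‖ ∂μ' := by
          rw [← Real.norm_eq_abs]; exact norm_integral_le_integral_norm _
        have e2 : ∫ x, ‖d x‖ ∂μ' = (eLpNorm d 1 μ').toReal := by
          rw [integral_norm_eq_lintegral_enorm (hdm.mono_measure hμ'ρ),
            eLpNorm_one_eq_lintegral_enorm]
        have e3 : eLpNorm d 1 μ' ≤ eLpNorm d 2 μ' * (μ' Set.univ) ^ (1 / 2 : ℝ) := by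
          have := eLpNorm_le_eLpNorm_mul_rpow_measure_univ (μ := μ')
            (by norm_num : (1:ℝ≥0∞) ≤ 2) (hdm.mono_measure hμ'ρ)
          convert this using 2
          norm_num
        have e4 : eLpNorm d 2 μ' ≤ ENNReal.ofReal ε :=
          (eLpNorm_mono_measure _ hμ'ρ).trans hdist
        have e5 : eLpNorm d 1 μ' ≤ ENNReal.ofReal ε * (μ' Set.univ) ^ (1 / 2 : ℝ) :=
          e3.trans (mul_le_mul_left e4 _)
        have hfin : ENNReal.ofReal ε * (μ' Set.univ) ^ (1 / 2 : ℝ) ≠ ∞ :=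
          ENNReal.mul_ne_top ENNReal.ofReal_ne_top
            (ENNReal.rpow_ne_top_of_nonneg (by norm_num) (measure_ne_top _ _))
        have e6 : (eLpNorm d 1 μ').toReal ≤ ε * K := by
          have := ENNReal.toReal_mono hfin e5
          rwa [ENNReal.toReal_mul, ENNReal.toReal_ofReal hε.le, ← ENNReal.toReal_rpow] at this
        exact e1.trans (e2 ▸ e6)
      -- bound on ∫ g dμ'
      have hgbd : ∃ Cg : ℝ, ∀ x, |g x| ≤ Cg :=
        ⟨‖g‖, fun x => by simpa [Real.norm_eq_abs] using g.norm_coe_le_norm x⟩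
      have hg1 : |∫ x, (g : ℝ → ℝ) x ∂μ'| ≤ S * (eLpNorm (⇑g) 2 ν).toReal :=
        keyA g g.continuous hgbd
      have hgν : (eLpNorm (⇑g) 2 ν).toReal ≤ (eLpNorm h 2 ν).toReal + ε := by
        have t1 : eLpNorm (⇑g) 2 ν ≤ eLpNorm h 2 ν + eLpNorm d 2 ν := by
          have : (⇑g : ℝ → ℝ) = fun x => h x - d x := by
            funext x; simp [hddef]
          rw [this]
          exact eLpNorm_sub_le (hhm.aestronglyMeasurable.mono_measure hνρ)
            (hdm.mono_measure hνρ) (by norm_num)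
        have t2 : eLpNorm d 2 ν ≤ ENNReal.ofReal ε :=
          (eLpNorm_mono_measure _ hνρ).trans hdist
        have t3 : eLpNorm (⇑g) 2 ν ≤ eLpNorm h 2 ν + ENNReal.ofReal ε :=
          t1.trans (add_le_add_right t2 _)
        have hfin : eLpNorm h 2 ν + ENNReal.ofReal ε ≠ ∞ :=
          ENNReal.add_ne_top.2 ⟨hhmemν.eLpNorm_ne_top, ENNReal.ofReal_ne_top⟩
        have := ENNReal.toReal_mono hfin t3
        rwa [ENNReal.toReal_add hhmemν.eLpNorm_ne_top ENNReal.ofReal_ne_top,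
          ENNReal.toReal_ofReal hε.le] at this
      have hsplit : ∫ x, h x ∂μ' = (∫ x, d x ∂μ') + ∫ x, (g : ℝ → ℝ) x ∂μ' := by
        rw [← integral_add hdint hgintμ']
        congr 1; funext x; simp [hddef]
      calc |∫ x, h x ∂μ'| ≤ |∫ x, d x ∂μ'| + |∫ x, (g : ℝ → ℝ) x ∂μ'| := by
            rw [hsplit]; exact abs_add_le _ _
        _ ≤ ε * K + S * ((eLpNorm h 2 ν).toReal + ε) :=
            add_le_add hd1 (hg1.trans (mul_le_mul_of_nonneg_left hgν hSnonneg))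
        _ = S * (eLpNorm h 2 ν).toReal + ε * (K + S) := by ring
    -- let ε → 0
    refine le_of_forall_pos_le_add fun ε hε => ?_
    have hδ : 0 < ε / (K + S + 1) := div_pos hε (by linarith)
    have := main _ hδ
    have hle : ε / (K + S + 1) * (K + S) ≤ ε := by
      rw [div_mul_eq_mul_div, div_le_iff₀ (by linarith : (0:ℝ) < K + S + 1)]
      nlinarith
    linarith
  -- Step C: absolute continuity
  have hAC : μ' ≪ ν := by
    refine Measure.AbsolutelyContinuous.mk fun s hs hνs => ?_
    have hbd : ∀ x, |Set.indicator s (fun _ => (1:ℝ)) x| ≤ 1 := by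
      intro x; by_cases hx : x ∈ s <;> simp [hx]
    have hkey := keyB (Set.indicator s fun _ => (1:ℝ))
      (measurable_const.indicator hs) ⟨1, hbd⟩
    have hzero : eLpNorm (Set.indicator s fun _ => (1:ℝ)) 2 ν = 0 := by
      have h0 : (Set.indicator s fun _ => (1:ℝ)) =ᵐ[ν] 0 := by
        filter_upwards [measure_eq_zero_iff_ae_notMem.1 hνs] with x hx
        simp [Set.indicator_of_notMem hx]
      rw [eLpNorm_congr_ae h0, eLpNorm_zero]
    rw [hzero] at hkey
    simp only [ENNReal.toReal_zero, mul_zero] at hkey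
    have hind : ∫ x, Set.indicator s (fun _ => (1:ℝ)) x ∂μ' = (μ' s).toReal := by
      simpa [Measure.real_def, Pi.one_def] using integral_indicator_one (μ := μ') hs
    rw [hind] at hkey
    have : (μ' s).toReal = 0 :=
      le_antisymm (le_trans (le_abs_self _) hkey) ENNReal.toReal_nonneg
    exact (ENNReal.toReal_eq_zero_iff _).1 this |>.resolve_right (measure_ne_top _ _)
  -- Radon–Nikodym derivative
  have hwd : ν.withDensity (μ'.rnDeriv ν) = μ' := Measure.withDensity_rnDeriv_eq μ' ν hAC
  set fl : ℝ → ℝ := fun x => (μ'.rnDeriv ν x).toReal with hfldef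
  have hflm : Measurable fl := (Measure.measurable_rnDeriv μ' ν).ennreal_toReal
  have hflnn : ∀ x, 0 ≤ fl x := fun x => ENNReal.toReal_nonneg
  have hflint : Integrable fl ν := Measure.integrable_toReal_rnDeriv
  -- truncations
  have htrunc : ∀ m : ℕ, ∫ x, (min (fl x) m) ^ 2 ∂ν ≤ C' := by
    intro m
    set h : ℝ → ℝ := fun x => min (fl x) m with hhdef
    have hhm : Measurable h := hflm.min measurable_const
    have hhnn : ∀ x, 0 ≤ h x := fun x => le_min (hflnn x) (Nat.cast_nonneg m)
    have hhbd : ∀ x, |h x| ≤ m := fun x => by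
      rw [abs_of_nonneg (hhnn x)]; exact min_le_right _ _
    have hhle : ∀ x, h x ≤ fl x := fun x => min_le_left _ _
    have hhmemν : MemLp h 2 ν := MemLp.of_bound hhm.aestronglyMeasurable m
      (ae_of_all _ fun x => by simpa [Real.norm_eq_abs] using hhbd x)
    -- ∫ h² ≤ ∫ h·fl
    have hint1 : Integrable (fun x => h x ^ 2) ν := hhmemν.integrable_sq
    have hint2 : Integrable (fun x => h x * fl x) ν := by
      refine Integrable.mono' (hflint.const_mul m) (hhm.mul hflm).aestronglyMeasurable
        (ae_of_all _ fun x => ?_)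
      rw [Real.norm_eq_abs, abs_of_nonneg (mul_nonneg (hhnn x) (hflnn x))]
      exact mul_le_mul_of_nonneg_right (min_le_right _ _) (hflnn x)
    have step1 : ∫ x, h x ^ 2 ∂ν ≤ ∫ x, h x * fl x ∂ν := by
      refine integral_mono hint1 hint2 fun x => ?_
      rw [sq]
      exact mul_le_mul_of_nonneg_left (hhle x) (hhnn x)
    -- ∫ h·fl dν = ∫ h dμ'
    have step2 : ∫ x, h x * fl x ∂ν = ∫ x, h x ∂μ' := by
      have hae : (μ'.rnDeriv ν) =ᵐ[ν] fun x => ((μ'.rnDeriv ν x).toNNReal : ℝ≥0∞) := by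
        filter_upwards [Measure.rnDeriv_lt_top μ' ν] with x hx
        rw [ENNReal.coe_toNNReal hx.ne]
      have : μ' = ν.withDensity fun x => ((μ'.rnDeriv ν x).toNNReal : ℝ≥0∞) :=
        hwd.symm.trans (withDensity_congr_ae hae)
      rw [this, integral_withDensity_eq_integral_smul
        ((Measure.measurable_rnDeriv μ' ν).ennreal_toNNReal) h]
      refine integral_congr_ae (ae_of_all _ fun x => ?_)
      simp [hfldef, NNReal.smul_def, mul_comm, ENNReal.coe_toNNReal_eq_toReal]
    have step3 : |∫ x, h x ∂μ'| ≤ S * (eLpNorm h 2 ν).toReal := keyB h hhm ⟨m, hhbd⟩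
    have hA : 0 ≤ ∫ x, h x ^ 2 ∂ν := integral_nonneg fun x => sq_nonneg _
    set A : ℝ := ∫ x, h x ^ 2 ∂ν with hAdef
    have hAle : A ≤ S * A ^ (1 / 2 : ℝ) := by
      calc A ≤ ∫ x, h x * fl x ∂ν := step1
        _ = ∫ x, h x ∂μ' := step2
        _ ≤ |∫ x, h x ∂μ'| := le_abs_self _
        _ ≤ S * (eLpNorm h 2 ν).toReal := step3
        _ = S * A ^ (1 / 2 : ℝ) := by rw [heLp h hhmemν]
    have ht : (A ^ (1 / 2 : ℝ)) ^ 2 = A := by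
      rw [← Real.rpow_natCast (A ^ (1 / 2 : ℝ)) 2, ← Real.rpow_mul hA]
      norm_num
    set t : ℝ := A ^ (1 / 2 : ℝ) with htdef
    have htnn : 0 ≤ t := Real.rpow_nonneg hA _
    have : t ^ 2 ≤ S * t := ht ▸ hAle
    nlinarith [sq_nonneg (S - t)]
  -- monotone convergence to get fl ∈ L²
  have hlim : ∫⁻ x, ENNReal.ofReal (fl x ^ 2) ∂ν ≤ ENNReal.ofReal C' := by
    have hptw : ∀ x, Tendsto (fun m : ℕ => ENNReal.ofReal ((min (fl x) m) ^ 2)) atTop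
        (nhds (ENNReal.ofReal (fl x ^ 2))) := by
      intro x
      refine tendsto_atTop_of_eventually_const (i₀ := ⌈fl x⌉₊) fun m hm => ?_
      rw [min_eq_left ((Nat.le_ceil (fl x)).trans (Nat.cast_le.2 hm))]
    have hcongr : ∀ x, ENNReal.ofReal (fl x ^ 2) =
        liminf (fun m : ℕ => ENNReal.ofReal ((min (fl x) m) ^ 2)) atTop :=
      fun x => ((hptw x).liminf_eq).symm
    calc ∫⁻ x, ENNReal.ofReal (fl x ^ 2) ∂ν
        = ∫⁻ x, liminf (fun m : ℕ => ENNReal.ofReal ((min (fl x) m) ^ 2)) atTop ∂ν :=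
          lintegral_congr fun x => hcongr x
      _ ≤ liminf (fun m : ℕ => ∫⁻ x, ENNReal.ofReal ((min (fl x) m) ^ 2) ∂ν) atTop :=
          lintegral_liminf_le fun m =>
            ((hflm.min measurable_const).pow_const 2).ennreal_ofReal
      _ ≤ ENNReal.ofReal C' := by
          have hbd : ∀ m : ℕ,
              ∫⁻ x, ENNReal.ofReal ((min (fl x) m) ^ 2) ∂ν ≤ ENNReal.ofReal C' := by
            intro m
            have hhm : Measurable fun x => min (fl x) (m:ℝ) := hflm.min measurable_const
            have hhnn : ∀ x, (0:ℝ) ≤ min (fl x) m := fun x =>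
              le_min (hflnn x) (Nat.cast_nonneg m)
            have hhmemν : MemLp (fun x => min (fl x) (m:ℝ)) 2 ν :=
              MemLp.of_bound hhm.aestronglyMeasurable m (ae_of_all _ fun x => by
                rw [Real.norm_eq_abs, abs_of_nonneg (hhnn x)]; exact min_le_right _ _)
            rw [← ofReal_integral_eq_lintegral_ofReal hhmemν.integrable_sq
              (ae_of_all _ fun x => sq_nonneg _)]
            exact ENNReal.ofReal_le_ofReal (htrunc m)
          calc liminf (fun m : ℕ => ∫⁻ x, ENNReal.ofReal ((min (fl x) m) ^ 2) ∂ν) atTop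
              ≤ liminf (fun _ : ℕ => ENNReal.ofReal C') atTop :=
                liminf_le_liminf (Eventually.of_forall hbd)
            _ = ENNReal.ofReal C' := liminf_const _
  -- conclude `fl ∈ L²`
  have hflsq : Integrable (fun x => fl x ^ 2) ν := by
    refine ⟨(hflm.pow_const 2).aestronglyMeasurable, ?_⟩
    rw [HasFiniteIntegral]
    have : ∀ x, ((‖fl x ^ 2‖₊ : ℝ≥0∞)) = ENNReal.ofReal (fl x ^ 2) := fun x =>
      Real.enorm_eq_ofReal (sq_nonneg _)
    calc ∫⁻ x, (‖fl x ^ 2‖₊ : ℝ≥0∞) ∂ν = ∫⁻ x, ENNReal.ofReal (fl x ^ 2) ∂ν :=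
          lintegral_congr fun x => this x
      _ ≤ ENNReal.ofReal C' := hlim
      _ < ∞ := ENNReal.ofReal_lt_top
  have hflmem : MemLp fl 2 ν :=
    (memLp_two_iff_integrable_sq hflm.aestronglyMeasurable).2 hflsq
  refine ⟨fl, hflmem, ?_⟩
  have hae : (fun x => ENNReal.ofReal (fl x)) =ᵐ[ν] μ'.rnDeriv ν := by
    filter_upwards [Measure.rnDeriv_lt_top μ' ν] with x hx
    simp [hfldef, ENNReal.ofReal_toReal hx.ne]
  calc μ.restrict (Set.Ioo a b) = μ' := rfl
    _ = ν.withDensity (μ'.rnDeriv ν) := hwd.symm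
    _ = ν.withDensity fun x => ENNReal.ofReal (fl x) := (withDensity_congr_ae hae).symm
end
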